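/- arXiv:2602.20836 — 7 statements merged into one kernel-verified Lean document; each statement's English description precedes it below -/
import Mathlib

section
/- Let a < b be real numbers, α > 0 and p ∈ [1, ∞). If φ ∈ L^p([a,b]) satisfies (I^α_{a+} φ)(x) = 0 for almost every x ∈ [a,b], then φ = 0 almost everywhere. Consequently, for any f ∈ I^α_{a+}(L^p) the function φ with f = I^α_{a+} φ is unique as an element of L^p([a,b]). -/
open MeasureTheory Set intervalIntegral

/-- Left Riemann–Liouville fractional integral of order `α` with base point `a`. -/
noncomputable def fracIntLeft (α a : ℝ) (φ : ℝ → ℝ) (x : ℝ) : ℝ :=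
  (1 / Real.Gamma α) * ∫ y in a..x, (x - y) ^ (α - 1) * φ y

lemma realBeta (α β : ℝ) (hα : 0 < α) (hβ : 0 < β) :
    ∫ s in (0:ℝ)..1, s ^ (α - 1) * (1 - s) ^ (β - 1)
      = Real.Gamma α * Real.Gamma β / Real.Gamma (α + β) := by
  have h1 : ((∫ s in (0:ℝ)..1, s ^ (α - 1) * (1 - s) ^ (β - 1) : ℝ) : ℂ)
      = Complex.betaIntegral α β := by
    rw [Complex.betaIntegral, ← intervalIntegral.integral_ofReal]
    apply intervalIntegral.integral_congr
    intro s hs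
    rw [Set.uIcc_of_le (by norm_num : (0:ℝ) ≤ 1)] at hs
    push_cast
    rw [Complex.ofReal_cpow hs.1, Complex.ofReal_cpow (by linarith [hs.2] : (0:ℝ) ≤ 1 - s)]
    push_cast
    ring
  have h2 := Complex.Gamma_mul_Gamma_eq_betaIntegral
    (s := (α:ℂ)) (t := (β:ℂ)) (by simpa using hα) (by simpa using hβ)
  have hne : Complex.Gamma ((α:ℂ) + β) ≠ 0 := by
    rw [← Complex.ofReal_add, Complex.Gamma_ofReal]
    exact_mod_cast (Real.Gamma_pos_of_pos (by linarith)).ne'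
  have h3 : Complex.betaIntegral α β
      = Complex.Gamma α * Complex.Gamma β / Complex.Gamma ((α:ℂ) + β) := by
    rw [h2]
    field_simp
  rw [h3] at h1
  rw [← Complex.ofReal_add, Complex.Gamma_ofReal, Complex.Gamma_ofReal,
    Complex.Gamma_ofReal] at h1
  exact_mod_cast h1

lemma betaKernel (α β y x : ℝ) (hα : 0 < α) (hβ : 0 < β) (hyx : y < x) :
    ∫ t in y..x, (x - t) ^ (β - 1) * (t - y) ^ (α - 1)
      = Real.Gamma α * Real.Gamma β / Real.Gamma (α + β) * (x - y) ^ (α + β - 1) := by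
  have hc : (0:ℝ) < x - y := by linarith
  have hsub := intervalIntegral.integral_comp_mul_add
    (f := fun t => (x - t) ^ (β - 1) * (t - y) ^ (α - 1)) (a := (0:ℝ)) (b := 1)
    (c := x - y) hc.ne' y
  simp only [mul_zero, zero_add, mul_one, sub_add_cancel] at hsub
  have key : ∫ s in (0:ℝ)..1, (x - ((x - y) * s + y)) ^ (β - 1) * ((x - y) * s + y - y) ^ (α - 1)
      = (x - y) ^ (β - 1) * (x - y) ^ (α - 1)
        * ∫ s in (0:ℝ)..1, s ^ (α - 1) * (1 - s) ^ (β - 1) := by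
    rw [← intervalIntegral.integral_const_mul]
    apply intervalIntegral.integral_congr
    intro s hs
    rw [Set.uIcc_of_le (by norm_num : (0:ℝ) ≤ 1)] at hs
    have h1 : x - ((x - y) * s + y) = (x - y) * (1 - s) := by ring
    have h2 : (x - y) * s + y - y = (x - y) * s := by ring
    simp only [h1, h2, Real.mul_rpow hc.le (by linarith [hs.2] : (0:ℝ) ≤ 1 - s),
      Real.mul_rpow hc.le hs.1]
    ring
  rw [key, realBeta α β hα hβ, smul_eq_mul] at hsub
  have hI : ∫ t in y..x, (x - t) ^ (β - 1) * (t - y) ^ (α - 1)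
      = (x - y) * ((x - y) ^ (β - 1) * (x - y) ^ (α - 1)
        * (Real.Gamma α * Real.Gamma β / Real.Gamma (α + β))) := by
    rw [hsub]
    field_simp
  rw [hI, show α + β - 1 = (β - 1) + ((α - 1) + 1) by ring,
    Real.rpow_add hc, Real.rpow_add hc, Real.rpow_one]
  ring

-- kernel with the (t-y) factor: integrable near left endpoint localized
lemma rightFactorInt (α y : ℝ) (hα : 0 < α) (u v : ℝ) :
    IntervalIntegrable (fun t => (t - y) ^ (α - 1)) volume u v := by
  simpa using (intervalIntegrable_rpow' (a := u - y) (b := v - y)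
    (by linarith : (-1:ℝ) < α - 1)).comp_sub_right y

lemma leftFactorInt (β x : ℝ) (hβ : 0 < β) (u v : ℝ) :
    IntervalIntegrable (fun t => (x - t) ^ (β - 1)) volume u v := by
  simpa using (intervalIntegrable_rpow' (a := x - u) (b := x - v)
    (by linarith : (-1:ℝ) < β - 1)).comp_sub_left x

lemma betaKernelInt (α β y x : ℝ) (hα : 0 < α) (hβ : 0 < β) (hyx : y < x) :
    IntervalIntegrable (fun t => (x - t) ^ (β - 1) * (t - y) ^ (α - 1)) volume y x := by
  set m := (y + x) / 2 with hm
  have hym : y < m := by rw [hm]; linarith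
  have hmx : m < x := by rw [hm]; linarith
  have h1 : IntervalIntegrable (fun t => (x - t) ^ (β - 1) * (t - y) ^ (α - 1)) volume y m := by
    have := (rightFactorInt α y hα y m).mul_continuousOn
      (g := fun t => (x - t) ^ (β - 1)) ?_
    · simpa [mul_comm] using this
    · apply ContinuousOn.rpow_const
      · fun_prop
      · intro t ht
        rw [Set.uIcc_of_le hym.le] at ht
        left; nlinarith [ht.2]
  have h2 : IntervalIntegrable (fun t => (x - t) ^ (β - 1) * (t - y) ^ (α - 1)) volume m x := by
    have := (leftFactorInt β x hβ m x).mul_continuousOn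
      (g := fun t => (t - y) ^ (α - 1)) ?_
    · simpa using this
    · apply ContinuousOn.rpow_const
      · fun_prop
      · intro t ht
        rw [Set.uIcc_of_le hmx.le] at ht
        left; nlinarith [ht.1]
  exact h1.trans h2

lemma powIntInt (ψ : ℝ → ℝ) (hint : Integrable ψ volume) (k : ℕ) (c : ℝ) (u v : ℝ) :
    IntervalIntegrable (fun y => (-y) ^ k * c * ψ y) volume u v :=
  (hint.intervalIntegrable).continuousOn_mul (by fun_prop)

lemma contG (ψ : ℝ → ℝ) (hint : Integrable ψ volume) (m : ℕ) (a : ℝ) :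
    Continuous (fun t => ∫ y in a..t, (t - y) ^ m * ψ y) := by
  have hrw : (fun t => ∫ y in a..t, (t - y) ^ m * ψ y)
      = fun t => ∑ j ∈ Finset.range (m + 1),
          t ^ j * ∫ y in a..t, (-y) ^ (m - j) * (m.choose j : ℝ) * ψ y := by
    funext t
    have h1 : ∀ y : ℝ, (t - y) ^ m * ψ y
        = ∑ j ∈ Finset.range (m + 1), t ^ j * ((-y) ^ (m - j) * (m.choose j : ℝ) * ψ y) := by
      intro y
      rw [sub_eq_add_neg, add_pow, Finset.sum_mul]
      apply Finset.sum_congr rfl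
      intro j _
      ring
    simp only [h1]
    rw [intervalIntegral.integral_finset_sum]
    · apply Finset.sum_congr rfl
      intro j _
      rw [intervalIntegral.integral_const_mul]
    · intro j _
      exact (powIntInt ψ hint _ _ _ _).const_mul _
  rw [hrw]
  apply continuous_finset_sum
  intro j _
  exact (continuous_pow j).mul
    (intervalIntegral.continuous_primitive (fun u v => powIntInt ψ hint _ _ u v) a)

lemma fubini_step (ψ : ℝ → ℝ) (hmeas : Measurable ψ) (hint : Integrable ψ volume)
    (α β a x : ℝ) (hα : 0 < α) (hβ : 0 < β) (hαβ : 1 ≤ α + β) (hax : a < x) :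
    ∫ t in a..x, (x - t) ^ (β - 1) * (∫ y in a..t, (t - y) ^ (α - 1) * ψ y)
      = Real.Gamma α * Real.Gamma β / Real.Gamma (α + β)
        * ∫ y in a..x, (x - y) ^ (α + β - 1) * ψ y := by
  set C := Real.Gamma α * Real.Gamma β / Real.Gamma (α + β) with hC
  have hCpos : 0 < C :=
    div_pos (mul_pos (Real.Gamma_pos_of_pos hα) (Real.Gamma_pos_of_pos hβ))
      (Real.Gamma_pos_of_pos (by linarith))
  set ν := volume.restrict (Ioc a x) with hν
  set F : ℝ × ℝ → ℝ := fun p =>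
    Set.indicator {p : ℝ × ℝ | p.2 < p.1}
      (fun p => (x - p.1) ^ (β - 1) * ((p.1 - p.2) ^ (α - 1) * ψ p.2)) p with hF
  have hFmeas : Measurable F := by
    apply Measurable.indicator
    · fun_prop
    · exact measurableSet_lt measurable_snd measurable_fst
  have hIoc : ∀ y ∈ Ioc a x, Ioi y ∩ Ioc a x = Ioc y x := by
    intro y hy
    ext t; simp only [mem_inter_iff, mem_Ioi, mem_Ioc]
    constructor
    · rintro ⟨h1, _, h3⟩; exact ⟨h1, h3⟩
    · rintro ⟨h1, h2⟩; exact ⟨h1, hy.1.trans h1, h2⟩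
  have hslice : ∀ y : ℝ, (fun t => F (t, y))
      = (Ioi y).indicator (fun t => (x - t) ^ (β - 1) * ((t - y) ^ (α - 1) * ψ y)) := by
    intro y
    ext t
    by_cases h : y < t
    · simp [hF, Set.indicator_of_mem, h, Set.mem_Ioi, Set.mem_setOf_eq]
    · simp [hF, Set.indicator_of_notMem, h, Set.mem_Ioi, Set.mem_setOf_eq]
  have hne : ∀ᵐ y ∂ν, y ≠ x := by
    rw [hν, ae_restrict_iff' measurableSet_Ioc]
    have h0 : ∀ᵐ y : ℝ, y ≠ x := by
      rw [Filter.eventually_iff, mem_ae_iff]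
      simpa using Real.volume_singleton
    filter_upwards [h0] with y hy _ using hy
  have hmem : ∀ᵐ y ∂ν, y ∈ Ioc a x := ae_restrict_mem measurableSet_Ioc
  -- inner t-integral for fixed y
  have hinner : ∀ y ∈ Ioc a x, y ≠ x →
      ∫ t, F (t, y) ∂ν = C * (x - y) ^ (α + β - 1) * ψ y := by
    intro y hy hyx
    have hylt : y < x := lt_of_le_of_ne hy.2 hyx
    rw [hν, hslice y, MeasureTheory.integral_indicator measurableSet_Ioi,
      Measure.restrict_restrict measurableSet_Ioi, hIoc y hy]
    have harr : ∀ t : ℝ, (x - t) ^ (β - 1) * ((t - y) ^ (α - 1) * ψ y)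
        = ((x - t) ^ (β - 1) * (t - y) ^ (α - 1)) * ψ y := fun t => by ring
    simp only [harr]
    rw [MeasureTheory.integral_mul_const, ← intervalIntegral.integral_of_le hylt.le,
      betaKernel α β y x hα hβ hylt, ← hC]
  have hsliceInt : ∀ y ∈ Ioc a x, y ≠ x → Integrable (fun t => F (t, y)) ν := by
    intro y hy hyx
    have hylt : y < x := lt_of_le_of_ne hy.2 hyx
    rw [hslice y, hν, integrable_indicator_iff measurableSet_Ioi, IntegrableOn,
      Measure.restrict_restrict measurableSet_Ioi, hIoc y hy]
    have h1 := ((betaKernelInt α β y x hα hβ hylt).mul_const (ψ y)).1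
    have h2 : IntegrableOn (fun t => (x - t) ^ (β - 1) * ((t - y) ^ (α - 1) * ψ y))
        (Ioc y x) volume := by
      simpa [mul_assoc] using h1
    exact h2
  have hnormval : ∀ y ∈ Ioc a x, y ≠ x →
      ∫ t, ‖F (t, y)‖ ∂ν = |ψ y| * (C * (x - y) ^ (α + β - 1)) := by
    intro y hy hyx
    have hylt : y < x := lt_of_le_of_ne hy.2 hyx
    calc ∫ t, ‖F (t, y)‖ ∂ν
        = ∫ t in Ioc y x, ‖(x - t) ^ (β - 1) * ((t - y) ^ (α - 1) * ψ y)‖ := by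
          have h0 : (fun t => ‖F (t, y)‖) = (Ioi y).indicator
              (fun t => ‖(x - t) ^ (β - 1) * ((t - y) ^ (α - 1) * ψ y)‖) := by
            funext t
            rw [show F (t, y) = (Ioi y).indicator
              (fun t => (x - t) ^ (β - 1) * ((t - y) ^ (α - 1) * ψ y)) t
              from congrFun (hslice y) t, norm_indicator_eq_indicator_norm]
          rw [hν, h0, MeasureTheory.integral_indicator measurableSet_Ioi,
            Measure.restrict_restrict measurableSet_Ioi, hIoc y hy]
      _ = ∫ t in Ioc y x, ((x - t) ^ (β - 1) * (t - y) ^ (α - 1)) * |ψ y| := by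
          apply setIntegral_congr_fun measurableSet_Ioc
          intro t ht
          have h1 : (0:ℝ) ≤ (x - t) ^ (β - 1) := Real.rpow_nonneg (by linarith [ht.2]) _
          have h2 : (0:ℝ) ≤ (t - y) ^ (α - 1) := Real.rpow_nonneg (by linarith [ht.1]) _
          simp only [Real.norm_eq_abs, abs_mul]
          rw [abs_of_nonneg h1, abs_of_nonneg h2]
          ring
      _ = |ψ y| * (C * (x - y) ^ (α + β - 1)) := by
          rw [MeasureTheory.integral_mul_const, ← intervalIntegral.integral_of_le hylt.le,
            betaKernel α β y x hα hβ hylt, ← hC]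
          ring
  have hprod : Integrable F (ν.prod ν) := by
    rw [integrable_prod_iff' (hFmeas.aestronglyMeasurable)]
    constructor
    · filter_upwards [hne, hmem] with y h1 h2
      exact hsliceInt y h2 h1
    · apply Integrable.mono' (g := fun y => |ψ y| * (C * (x - a) ^ (α + β - 1)))
      · exact (hint.abs.restrict).mul_const _
      · apply AEStronglyMeasurable.integral_prod_right'
          (f := fun p : ℝ × ℝ => ‖F (p.2, p.1)‖)
        exact ((hFmeas.comp measurable_swap).norm).aestronglyMeasurable
      · filter_upwards [hne, hmem] with y h1 h2
        rw [hnormval y h2 h1]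
        have hxy : (x - y) ^ (α + β - 1) ≤ (x - a) ^ (α + β - 1) :=
          Real.rpow_le_rpow (by linarith [h2.2]) (by linarith [h2.1]) (by linarith)
        rw [Real.norm_eq_abs, abs_of_nonneg (mul_nonneg (abs_nonneg _)
          (mul_nonneg hCpos.le (Real.rpow_nonneg (by linarith [h2.2]) _)))]
        exact mul_le_mul_of_nonneg_left
          (mul_le_mul_of_nonneg_left hxy hCpos.le) (abs_nonneg _)
  have hswap := integral_integral_swap (f := fun t y => F (t, y)) (μ := ν) (ν := ν) hprod
  have hLHS : ∫ t in a..x, (x - t) ^ (β - 1) * (∫ y in a..t, (t - y) ^ (α - 1) * ψ y)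
      = ∫ t, (∫ y, F (t, y) ∂ν) ∂ν := by
    rw [intervalIntegral.integral_of_le hax.le, hν]
    apply setIntegral_congr_fun measurableSet_Ioc
    intro t ht
    show (x - t) ^ (β - 1) * (∫ y in a..t, (t - y) ^ (α - 1) * ψ y)
      = ∫ y in Ioc a x, F (t, y)
    have hslice2 : (fun y => F (t, y))
        = (Iio t).indicator (fun y => (x - t) ^ (β - 1) * ((t - y) ^ (α - 1) * ψ y)) := by
      ext y
      by_cases h : y < t
      · simp [hF, Set.indicator_of_mem, h, Set.mem_Iio, Set.mem_setOf_eq]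
      · simp [hF, Set.indicator_of_notMem, h, Set.mem_Iio, Set.mem_setOf_eq]
    rw [hslice2, MeasureTheory.integral_indicator measurableSet_Iio,
      Measure.restrict_restrict measurableSet_Iio]
    have hIoo : Iio t ∩ Ioc a x = Ioo a t := by
      ext u; simp only [mem_inter_iff, mem_Iio, mem_Ioc, mem_Ioo]
      constructor
      · rintro ⟨h1, h2, _⟩; exact ⟨h2, h1⟩
      · rintro ⟨h1, h2⟩; exact ⟨h2, h1, (by linarith [ht.2] : u ≤ x)⟩
    rw [hIoo, MeasureTheory.integral_const_mul, setIntegral_congr_set Ioo_ae_eq_Ioc,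
      ← intervalIntegral.integral_of_le ht.1.le]
  have hRHS : ∫ y, (∫ t, F (t, y) ∂ν) ∂ν
      = C * ∫ y in a..x, (x - y) ^ (α + β - 1) * ψ y := by
    rw [intervalIntegral.integral_of_le hax.le, ← MeasureTheory.integral_const_mul, ← hν]
    apply MeasureTheory.integral_congr_ae
    filter_upwards [hne, hmem] with y h1 h2
    rw [hinner y h2 h1]
    ring
  beta_reduce at hswap
  rw [hLHS, hswap, hRHS]

lemma descent (ψ : ℝ → ℝ) (hmeas : Measurable ψ) (hint : Integrable ψ volume)
    (a b : ℝ) (hab : a < b) (m : ℕ)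
    (h : ∀ x ∈ Icc a b, ∫ y in a..x, (x - y) ^ (m + 1) * ψ y = 0) :
    ∀ x ∈ Icc a b, ∫ y in a..x, (x - y) ^ m * ψ y = 0 := by
  set G : ℝ → ℝ := fun t => ∫ y in a..t, (t - y) ^ m * ψ y with hG
  have hGcont : Continuous G := contG ψ hint m a
  -- the primitive of G vanishes on `Icc a b`
  have hF0 : ∀ x ∈ Icc a b, ∫ t in a..x, G t = 0 := by
    intro x hx
    rcases eq_or_lt_of_le hx.1 with h1 | h1
    · rw [← h1, intervalIntegral.integral_same]
    · have hfub := fubini_step ψ hmeas hint (m + 1) 1 a x (by positivity) one_pos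
        (by push_cast; linarith) h1
      have e1 : ∀ t : ℝ, (x - t) ^ ((1:ℝ) - 1) = 1 := by
        intro t; rw [sub_self, Real.rpow_zero]
      have e2 : ∀ t y : ℝ, (t - y) ^ ((m + 1 : ℝ) - 1) = (t - y) ^ m := by
        intro t y
        rw [show (m + 1 : ℝ) - 1 = (m : ℝ) by ring, Real.rpow_natCast]
      have e3 : ∀ y : ℝ, (x - y) ^ ((m:ℝ) + 1 + 1 - 1) = (x - y) ^ (m + 1) := by
        intro y
        rw [show (m : ℝ) + 1 + 1 - 1 = ((m + 1 : ℕ) : ℝ) by push_cast; ring,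
          Real.rpow_natCast]
      simp only [e1, e2, e3, one_mul] at hfub
      push_cast at hfub
      rw [hfub, h x hx, mul_zero]
  -- G is zero on the open interval
  have hGioo : ∀ x ∈ Ioo a b, G x = 0 := by
    intro x hx
    have hder : HasDerivAt (fun u => ∫ t in a..u, G t) (G x) x :=
      (hGcont.integral_hasStrictDerivAt a x).hasDerivAt
    have hev : (fun u => ∫ t in a..u, G t) =ᶠ[nhds x] (fun _ => (0:ℝ)) := by
      filter_upwards [isOpen_Ioo.mem_nhds hx] with u hu
      exact hF0 u ⟨hu.1.le, hu.2.le⟩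
    have hder0 : HasDerivAt (fun _ : ℝ => (0:ℝ)) (G x) x := by
      rwa [← hev.hasDerivAt_iff]
    have := hder0.unique (hasDerivAt_const x 0)
    exact this
  -- conclude on the closed interval
  intro x hx
  rcases eq_or_lt_of_le hx.1 with h1 | h1
  · rw [← h1]; exact intervalIntegral.integral_same
  rcases eq_or_lt_of_le hx.2 with h2 | h2
  · have hcl : Set.EqOn G 0 (closure (Ioo a b)) :=
      Set.EqOn.closure (fun y hy => hGioo y hy) hGcont continuous_const
    have : x ∈ closure (Ioo a b) := by
      rw [closure_Ioo hab.ne, h2]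
      exact ⟨hab.le, le_refl _⟩
    exact hcl this
  · exact hGioo x ⟨h1, h2⟩

lemma bottom (ψ : ℝ → ℝ) (hint : Integrable ψ volume) (a : ℝ)
    (h : ∀ x : ℝ, ∫ y in a..x, ψ y = 0) : ∀ᵐ x : ℝ, ψ x = 0 := by
  have hL := IsUnifLocDoublingMeasure.ae_tendsto_average (μ := (volume : Measure ℝ))
    (f := ψ) hint.locallyIntegrable 1
  filter_upwards [hL] with x hx
  have ht : Filter.Tendsto (fun j : ℝ => ⨍ y in Metric.closedBall x j, ψ y)
      (nhdsWithin 0 (Ioi 0)) (nhds (ψ x)) := by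
    apply hx (fun _ => x) id
    · exact Filter.tendsto_id
    · filter_upwards [self_mem_nhdsWithin] with j hj
      simp only [Metric.mem_closedBall, dist_self]
      have := mem_Ioi.mp hj
      simp only [id_eq]
      linarith
  have hzero : ∀ j : ℝ, 0 < j → (⨍ y in Metric.closedBall x j, ψ y) = 0 := by
    intro j hj
    have hset : ∫ y in Metric.closedBall x j, ψ y = 0 := by
      rw [Real.closedBall_eq_Icc, ← setIntegral_congr_set Ioc_ae_eq_Icc,
        ← intervalIntegral.integral_of_le (by linarith)]
      have := intervalIntegral.integral_interval_sub_left
        (a := a) (b := x + j) (c := x - j)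
        (hint.intervalIntegrable) (hint.intervalIntegrable)
      rw [← this, h, h, sub_zero]
    rw [setAverage_eq, hset, smul_zero]
  have ht2 : Filter.Tendsto (fun j : ℝ => ⨍ y in Metric.closedBall x j, ψ y)
      (nhdsWithin 0 (Ioi 0)) (nhds 0) := by
    apply Filter.Tendsto.congr' _ tendsto_const_nhds
    filter_upwards [self_mem_nhdsWithin] with j hj
    exact (hzero j hj).symm
  exact tendsto_nhds_unique ht ht2

lemma rpow_primitive (γ y u v : ℝ) (hγ : 0 < γ) (hyu : y ≤ u) (huv : u ≤ v) :
    ∫ x in u..v, (x - y) ^ (γ - 1) = ((v - y) ^ γ - (u - y) ^ γ) / γ := by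
  rw [intervalIntegral.integral_comp_sub_right (fun x => x ^ (γ - 1)) y,
    integral_rpow (Or.inl (by linarith))]
  rw [sub_add_cancel]

lemma aeInt (ψ : ℝ → ℝ) (hmeas : Measurable ψ) (hint : Integrable ψ volume)
    (α a b : ℝ) (hα : 0 < α) (hab : a < b) :
    ∀ᵐ x ∂(volume.restrict (Ioc a b)),
      IntegrableOn (fun y => (x - y) ^ (α - 1) * ψ y) (Ioc a x) volume := by
  set ν := volume.restrict (Ioc a b) with hν
  set F : ℝ × ℝ → ℝ := fun p =>
    Set.indicator {p : ℝ × ℝ | p.2 < p.1}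
      (fun p => (p.1 - p.2) ^ (α - 1) * ψ p.2) p with hF
  have hFmeas : Measurable F := by
    apply Measurable.indicator
    · fun_prop
    · exact measurableSet_lt measurable_snd measurable_fst
  have hIoc : ∀ y ∈ Ioc a b, Ioi y ∩ Ioc a b = Ioc y b := by
    intro y hy
    ext t; simp only [mem_inter_iff, mem_Ioi, mem_Ioc]
    constructor
    · rintro ⟨h1, _, h3⟩; exact ⟨h1, h3⟩
    · rintro ⟨h1, h2⟩; exact ⟨h1, hy.1.trans h1, h2⟩
  have hslice : ∀ y : ℝ, (fun x => F (x, y))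
      = (Ioi y).indicator (fun x => (x - y) ^ (α - 1) * ψ y) := by
    intro y
    ext x
    by_cases h : y < x
    · simp [hF, Set.indicator_of_mem, h, Set.mem_Ioi, Set.mem_setOf_eq]
    · simp [hF, Set.indicator_of_notMem, h, Set.mem_Ioi, Set.mem_setOf_eq]
  have hker : ∀ y ∈ Ioc a b, IntegrableOn (fun x => (x - y) ^ (α - 1) * ψ y) (Ioc y b) := by
    intro y hy
    apply Integrable.mul_const
    have := (intervalIntegrable_rpow' (a := y - y) (b := b - y)
      (by linarith : (-1:ℝ) < α - 1)).comp_sub_right y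
    have h2 := this.1
    exact (by simpa using h2 : IntegrableOn (fun x => (x - y) ^ (α - 1)) (Ioc y b) volume)
  have hsliceInt : ∀ y ∈ Ioc a b, Integrable (fun x => F (x, y)) ν := by
    intro y hy
    rw [hslice y, hν, integrable_indicator_iff measurableSet_Ioi, IntegrableOn,
      Measure.restrict_restrict measurableSet_Ioi, hIoc y hy]
    exact hker y hy
  have hnorm : ∀ y ∈ Ioc a b, ∫ x, ‖F (x, y)‖ ∂ν
      = |ψ y| * ((b - y) ^ α / α) := by
    intro y hy
    have h0 : (fun x => ‖F (x, y)‖) = (Ioi y).indicator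
        (fun x => ‖(x - y) ^ (α - 1) * ψ y‖) := by
      funext x
      rw [show F (x, y) = (Ioi y).indicator (fun x => (x - y) ^ (α - 1) * ψ y) x
        from congrFun (hslice y) x, norm_indicator_eq_indicator_norm]
    rw [hν, h0, MeasureTheory.integral_indicator measurableSet_Ioi,
      Measure.restrict_restrict measurableSet_Ioi, hIoc y hy]
    have : ∀ x ∈ Ioc y b, ‖(x - y) ^ (α - 1) * ψ y‖ = (x - y) ^ (α - 1) * |ψ y| := by
      intro x hx
      rw [Real.norm_eq_abs, abs_mul,
        abs_of_nonneg (Real.rpow_nonneg (by linarith [hx.1] : (0:ℝ) ≤ x - y) _)]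
    rw [setIntegral_congr_fun measurableSet_Ioc this, MeasureTheory.integral_mul_const,
      ← intervalIntegral.integral_of_le hy.2, rpow_primitive α y y b hα le_rfl hy.2,
      sub_self, Real.zero_rpow hα.ne', sub_zero]
    ring
  have hprod : Integrable F (ν.prod ν) := by
    rw [integrable_prod_iff' (hFmeas.aestronglyMeasurable)]
    constructor
    · filter_upwards [ae_restrict_mem measurableSet_Ioc] with y hy
      exact hsliceInt y hy
    · apply Integrable.mono' (g := fun y => |ψ y| * ((b - a) ^ α / α))
      · exact (hint.abs.restrict).mul_const _
      · apply AEStronglyMeasurable.integral_prod_right'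
          (f := fun p : ℝ × ℝ => ‖F (p.2, p.1)‖)
        exact ((hFmeas.comp measurable_swap).norm).aestronglyMeasurable
      · filter_upwards [ae_restrict_mem measurableSet_Ioc] with y hy
        rw [hnorm y hy, Real.norm_eq_abs, abs_of_nonneg (mul_nonneg (abs_nonneg _)
          (div_nonneg (Real.rpow_nonneg (by linarith [hy.2]) _) hα.le))]
        have hbb : (b - y) ^ α ≤ (b - a) ^ α :=
          Real.rpow_le_rpow (by linarith [hy.2]) (by linarith [hy.1]) hα.le
        exact mul_le_mul_of_nonneg_left ((div_le_div_iff_of_pos_right hα).mpr hbb) (abs_nonneg _)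
  filter_upwards [((integrable_prod_iff (hFmeas.aestronglyMeasurable)).1 hprod).1,
    ae_restrict_mem measurableSet_Ioc] with x hx hxm
  have hslice2 : (fun y => F (x, y))
      = (Iio x).indicator (fun y => (x - y) ^ (α - 1) * ψ y) := by
    ext y
    by_cases h : y < x
    · simp [hF, Set.indicator_of_mem, h, Set.mem_Iio, Set.mem_setOf_eq]
    · simp [hF, Set.indicator_of_notMem, h, Set.mem_Iio, Set.mem_setOf_eq]
  rw [hslice2, hν, integrable_indicator_iff measurableSet_Iio, IntegrableOn,
    Measure.restrict_restrict measurableSet_Iio] at hx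
  have hIoo : Iio x ∩ Ioc a b = Ioo a x := by
    ext u; simp only [mem_inter_iff, mem_Iio, mem_Ioc, mem_Ioo]
    constructor
    · rintro ⟨h1, h2, _⟩; exact ⟨h2, h1⟩
    · rintro ⟨h1, h2⟩; exact ⟨h2, h1, (by linarith [hxm.2] : u ≤ b)⟩
  rw [hIoo] at hx
  rw [IntegrableOn, ← Measure.restrict_congr_set Ioo_ae_eq_Ioc]
  exact hx

lemma core (ψ : ℝ → ℝ) (hmeas : Measurable ψ) (hint : Integrable ψ volume)
    (a b α : ℝ) (hab : a < b) (hα : 0 < α)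
    (hsupp : ∀ x, x ∉ Ioc a b → ψ x = 0)
    (h : ∀ᵐ x ∂(volume.restrict (Ioc a b)), ∫ y in a..x, (x - y) ^ (α - 1) * ψ y = 0) :
    ∀ᵐ x : ℝ, ψ x = 0 := by
  set n : ℕ := ⌊α⌋₊ + 1 with hn
  have hαn : α < n := by
    have := Nat.lt_floor_add_one α
    push_cast [hn]
    push_cast at this
    linarith
  set β : ℝ := n - α with hβdef
  have hβ : 0 < β := by rw [hβdef]; linarith
  have hn1 : (1:ℝ) ≤ n := by
    have : (1:ℕ) ≤ n := by omega
    exact_mod_cast this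
  have hC : (0:ℝ) < Real.Gamma α * Real.Gamma β / Real.Gamma (α + β) :=
    div_pos (mul_pos (Real.Gamma_pos_of_pos hα) (Real.Gamma_pos_of_pos hβ))
      (Real.Gamma_pos_of_pos (by linarith))
  have htop : ∀ x ∈ Icc a b, ∫ y in a..x, (x - y) ^ (n - 1 : ℕ) * ψ y = 0 := by
    intro x hx
    rcases eq_or_lt_of_le hx.1 with h1 | h1
    · rw [← h1]; exact intervalIntegral.integral_same
    have hfub := fubini_step ψ hmeas hint α β a x hα hβ (by rw [hβdef]; linarith) h1
    have hz : ∀ᵐ t ∂(volume.restrict (Ioc a x)),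
        ∫ y in a..t, (t - y) ^ (α - 1) * ψ y = 0 :=
      ae_restrict_of_ae_restrict_of_subset (Ioc_subset_Ioc_right hx.2) h
    have hzero : ∫ t in a..x, (x - t) ^ (β - 1) * (∫ y in a..t, (t - y) ^ (α - 1) * ψ y)
        = 0 := by
      rw [intervalIntegral.integral_of_le h1.le]
      apply MeasureTheory.integral_eq_zero_of_ae
      filter_upwards [hz] with t ht
      simp [ht]
    rw [hzero] at hfub
    have hint0 : ∫ y in a..x, (x - y) ^ (α + β - 1) * ψ y = 0 := by
      have := hfub.symm
      rcases mul_eq_zero.mp this with hbad | hok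
      · exact absurd hbad hC.ne'
      · exact hok
    have hconv : ∀ y : ℝ, (x - y) ^ (α + β - 1) = (x - y) ^ (n - 1 : ℕ) := by
      intro y
      rw [show α + β - 1 = ((n - 1 : ℕ) : ℝ) by
        rw [hβdef]; push_cast [Nat.cast_sub (by omega : 1 ≤ n)]; ring,
        Real.rpow_natCast]
    simp only [hconv] at hint0
    exact hint0
  have hstep : ∀ k : ℕ, (∀ x ∈ Icc a b, ∫ y in a..x, (x - y) ^ k * ψ y = 0)
      → ∀ x ∈ Icc a b, ∫ y in a..x, ψ y = 0 := by
    intro k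
    induction k with
    | zero => intro h0 x hx; simpa using h0 x hx
    | succ k ih => intro h0; exact ih (descent ψ hmeas hint a b hab k h0)
  have h0 := hstep (n - 1) htop
  have hall : ∀ x : ℝ, ∫ y in a..x, ψ y = 0 := by
    intro x
    rcases le_or_gt x a with hxa | hax
    · rw [intervalIntegral.integral_symm, intervalIntegral.integral_of_le hxa]
      have hz1 : ∀ y ∈ Ioc x a, ψ y = (fun _ => (0:ℝ)) y := by
        intro y hy
        apply hsupp
        simp only [mem_Ioc, not_and_or, not_lt, not_le]
        exact Or.inl (by linarith [hy.2])
      rw [setIntegral_congr_fun measurableSet_Ioc hz1]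
      simp
    rcases le_or_gt x b with hxb | hbx
    · exact h0 x ⟨hax.le, hxb⟩
    · rw [← intervalIntegral.integral_add_adjacent_intervals
        (a := a) (b := b) (c := x) hint.intervalIntegrable hint.intervalIntegrable,
        h0 b ⟨hab.le, le_refl b⟩, intervalIntegral.integral_of_le hbx.le]
      have hz2 : ∀ y ∈ Ioc b x, ψ y = (fun _ => (0:ℝ)) y := by
        intro y hy
        apply hsupp
        simp only [mem_Ioc, not_and_or, not_lt, not_le]
        exact Or.inr (by linarith [hy.1])
      rw [setIntegral_congr_fun measurableSet_Ioc hz2]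
      simp
  exact bottom ψ hint a hall

lemma mkPsi (a b : ℝ) (φ : ℝ → ℝ) (hφint : Integrable φ (volume.restrict (Icc a b))) :
    ∃ ψ : ℝ → ℝ, Measurable ψ ∧ Integrable ψ volume ∧ (∀ x, x ∉ Ioc a b → ψ x = 0) ∧
      φ =ᵐ[volume.restrict (Ioc a b)] ψ := by
  have hsm := hφint.aestronglyMeasurable
  set g := hsm.mk φ with hg
  refine ⟨(Ioc a b).indicator g, (hsm.stronglyMeasurable_mk.measurable).indicator
    measurableSet_Ioc, ?_, ?_, ?_⟩
  · rw [integrable_indicator_iff measurableSet_Ioc]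
    have hg2 : IntegrableOn g (Icc a b) volume := hφint.congr hsm.ae_eq_mk
    exact hg2.mono_set Ioc_subset_Icc_self
  · intro x hx
    exact Set.indicator_of_notMem hx _
  · have h1 : φ =ᵐ[volume.restrict (Ioc a b)] g :=
      ae_restrict_of_ae_restrict_of_subset Ioc_subset_Icc_self hsm.ae_eq_mk
    filter_upwards [h1, ae_restrict_mem measurableSet_Ioc] with y hy1 hy2
    rw [hy1, Set.indicator_of_mem hy2]

/-- The fractional integral operator `I^α_{a+}` is injective on `L^p([a,b])`:
if `I^α_{a+} φ = 0` a.e. on `[a,b]` then `φ = 0` a.e. on `[a,b]`.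
Consequently, the `L^p` preimage of any `f ∈ I^α_{a+}(L^p)` is unique
(as an element of `L^p`, i.e. up to a.e. equality). -/
theorem fracIntLeft_injective
    (a b α p : ℝ) (hab : a < b) (hα : 0 < α) (hp : 1 ≤ p) :
    (∀ φ : ℝ → ℝ,
        MemLp φ (ENNReal.ofReal p) (volume.restrict (Icc a b)) →
        (∀ᵐ x ∂(volume.restrict (Icc a b)), fracIntLeft α a φ x = 0) →
        ∀ᵐ x ∂(volume.restrict (Icc a b)), φ x = 0) ∧
    ∀ φ₁ φ₂ : ℝ → ℝ,
      MemLp φ₁ (ENNReal.ofReal p) (volume.restrict (Icc a b)) →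
      MemLp φ₂ (ENNReal.ofReal p) (volume.restrict (Icc a b)) →
      (∀ᵐ x ∂(volume.restrict (Icc a b)),
          fracIntLeft α a φ₁ x = fracIntLeft α a φ₂ x) →
      ∀ᵐ x ∂(volume.restrict (Icc a b)), φ₁ x = φ₂ x := by
  haveI hfin : IsFiniteMeasure (volume.restrict (Icc a b)) :=
    ⟨by rw [Measure.restrict_apply_univ]; exact measure_Icc_lt_top⟩
  have hΓ : (0:ℝ) < 1 / Real.Gamma α := by
    have := Real.Gamma_pos_of_pos hα
    positivity
  have hrw : volume.restrict (Ioc a b) = volume.restrict (Icc a b) :=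
    Measure.restrict_congr_set Ioc_ae_eq_Icc
  have main : ∀ φ : ℝ → ℝ,
      MemLp φ (ENNReal.ofReal p) (volume.restrict (Icc a b)) →
      (∀ᵐ x ∂(volume.restrict (Icc a b)), fracIntLeft α a φ x = 0) →
      ∀ᵐ x ∂(volume.restrict (Icc a b)), φ x = 0 := by
    intro φ hmem hvan
    have hφint : Integrable φ (volume.restrict (Icc a b)) :=
      hmem.integrable (by rwa [ENNReal.one_le_ofReal])
    obtain ⟨ψ, hψmeas, hψint, hψsupp, hφψ⟩ := mkPsi a b φ hφint
    have hvan' : ∀ᵐ x ∂(volume.restrict (Ioc a b)),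
        ∫ y in a..x, (x - y) ^ (α - 1) * ψ y = 0 := by
      have hv1 : ∀ᵐ x ∂(volume.restrict (Ioc a b)), fracIntLeft α a φ x = 0 := by
        rw [hrw]; exact hvan
      filter_upwards [hv1, ae_restrict_mem measurableSet_Ioc] with x hx hxm
      have hfi : ∫ y in a..x, (x - y) ^ (α - 1) * φ y = 0 := by
        rw [fracIntLeft] at hx
        rcases mul_eq_zero.mp hx with hbad | hok
        · exact absurd hbad hΓ.ne'
        · exact hok
      rw [← hfi]
      rw [intervalIntegral.integral_of_le hxm.1.le, intervalIntegral.integral_of_le hxm.1.le]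
      apply MeasureTheory.integral_congr_ae
      have h2 : φ =ᵐ[volume.restrict (Ioc a x)] ψ :=
        ae_restrict_of_ae_restrict_of_subset (Ioc_subset_Ioc_right hxm.2) hφψ
      filter_upwards [h2] with y hy
      rw [hy]
    have hae0 := core ψ hψmeas hψint a b α hab hα hψsupp hvan'
    rw [← hrw]
    filter_upwards [ae_restrict_of_ae hae0, hφψ] with x h1 h2
    rw [h2, h1]
  refine ⟨main, ?_⟩
  intro φ₁ φ₂ h1 h2 hvan
  have hsub := main (φ₁ - φ₂) (h1.sub h2) ?_
  · filter_upwards [hsub] with x hx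
    have : φ₁ x - φ₂ x = 0 := by simpa using hx
    linarith
  · -- fracIntLeft of the difference vanishes a.e.
    have hφ1int : Integrable φ₁ (volume.restrict (Icc a b)) :=
      h1.integrable (by rwa [ENNReal.one_le_ofReal])
    have hφ2int : Integrable φ₂ (volume.restrict (Icc a b)) :=
      h2.integrable (by rwa [ENNReal.one_le_ofReal])
    obtain ⟨ψ₁, hm1, hi1, hs1, he1⟩ := mkPsi a b φ₁ hφ1int
    obtain ⟨ψ₂, hm2, hi2, hs2, he2⟩ := mkPsi a b φ₂ hφ2int
    rw [← hrw]
    have hvan' : ∀ᵐ x ∂(volume.restrict (Ioc a b)),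
        fracIntLeft α a φ₁ x = fracIntLeft α a φ₂ x := by rw [hrw]; exact hvan
    filter_upwards [hvan', aeInt ψ₁ hm1 hi1 α a b hα hab, aeInt ψ₂ hm2 hi2 α a b hα hab,
      ae_restrict_mem measurableSet_Ioc] with x hx hI1 hI2 hxm
    -- transfer integrability from ψᵢ to φᵢ
    have hJ1 : IntegrableOn (fun y => (x - y) ^ (α - 1) * φ₁ y) (Ioc a x) volume := by
      apply hI1.congr
      have := ae_restrict_of_ae_restrict_of_subset (Ioc_subset_Ioc_right hxm.2) he1
      filter_upwards [this] with y hy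
      rw [hy]
    have hJ2 : IntegrableOn (fun y => (x - y) ^ (α - 1) * φ₂ y) (Ioc a x) volume := by
      apply hI2.congr
      have := ae_restrict_of_ae_restrict_of_subset (Ioc_subset_Ioc_right hxm.2) he2
      filter_upwards [this] with y hy
      rw [hy]
    have hK1 : IntervalIntegrable (fun y => (x - y) ^ (α - 1) * φ₁ y) volume a x := by
      rw [intervalIntegrable_iff_integrableOn_Ioc_of_le hxm.1.le]
      exact hJ1
    have hK2 : IntervalIntegrable (fun y => (x - y) ^ (α - 1) * φ₂ y) volume a x := by
      rw [intervalIntegrable_iff_integrableOn_Ioc_of_le hxm.1.le]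
      exact hJ2
    rw [fracIntLeft]
    have hsplit : ∫ y in a..x, (x - y) ^ (α - 1) * (φ₁ - φ₂) y
        = (∫ y in a..x, (x - y) ^ (α - 1) * φ₁ y)
          - ∫ y in a..x, (x - y) ^ (α - 1) * φ₂ y := by
      rw [← intervalIntegral.integral_sub hK1 hK2]
      apply intervalIntegral.integral_congr
      intro y _
      simp [Pi.sub_apply]
      ring
    rw [hsplit]
    rw [fracIntLeft, fracIntLeft] at hx
    have hΓne : (1 / Real.Gamma α) ≠ 0 := hΓ.ne'
    field_simp at hx ⊢
    linarith [hx]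
end

section
/- Let H ∈ (1/2, 1), set α = H − 1/2, and let c_H = sqrt( H(2H−1) / B(2−2H, H−1/2) ), where B denotes the Beta function. Define, for 0 < u < t, the kernel K_H(t,u) = c_H u^{−α} ∫_u^t (r−u)^{α−1} r^α dr. Then for all 0 < s ≤ t, ∫_0^s K_H(t,u) K_H(s,u) du = (1/2) ( t^{2H} + s^{2H} − (t−s)^{2H} ), i.e. the kernel K_H reproduces the fractional Brownian motion covariance R_H(t,s). -/
open MeasureTheory intervalIntegral

/-- The (real) Beta function `B(a,b) = ∫_0^1 y^(a-1) (1-y)^(b-1) dy`. -/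
noncomputable def betaFun (a b : ℝ) : ℝ :=
  ∫ y in (0:ℝ)..1, y ^ (a - 1) * (1 - y) ^ (b - 1)

/-- The square-integrable kernel of fractional Brownian motion for `H > 1/2`:
`K_H(t,u) = c_H u^{-α} ∫_u^t (r-u)^{α-1} r^α dr` with `α = H - 1/2`. -/
noncomputable def fbmKernel (H t u : ℝ) : ℝ :=
  Real.sqrt (H * (2 * H - 1) / betaFun (2 - 2 * H) (H - 1 / 2)) *
    u ^ (-(H - 1 / 2)) * ∫ r in u..t, (r - u) ^ ((H - 1 / 2) - 1) * r ^ (H - 1 / 2)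

/-!
Write `a = H - 1/2` and `K_H(t,u) = c_H u^{-a} A(t,u)`. Expanding both inner integrals, the
product `K_H(t,u) K_H(s,u)` becomes a nonnegative triple integral over `0 < u < v < s`,
`u < r < t`, so Tonelli lets us integrate in `u` first. The Möbius substitution
`u = z v r / (r - v + v z)` turns that innermost integral
`∫_0^{min(v,r)} u^{-2a} (v-u)^{a-1} (r-u)^{a-1} du` into `B(1-2a, a) (v r)^{-a} |v-r|^{2a-1}`.
The factors `(v r)^{±a}` cancel, and what is left, `c_H² B ∫_0^s ∫_0^t |v-r|^{2H-2} dr dv`,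
is elementary. The computation runs in `ℝ≥0∞`, where Tonelli needs no integrability.
-/

open Set ENNReal Function ProbabilityTheory

theorem ofReal_intervalIntegral_eq_lintegral_Ioo {f : ℝ → ℝ} {a b : ℝ} (hab : a ≤ b)
    (hf : IntervalIntegrable f volume a b) (hf₀ : ∀ x ∈ Ioo a b, 0 ≤ f x) :
    ENNReal.ofReal (∫ x in a..b, f x) = ∫⁻ x in Ioo a b, ENNReal.ofReal (f x) := by
  rw [intervalIntegral.integral_of_le hab, integral_Ioc_eq_integral_Ioo]
  exact ofReal_integral_eq_lintegral_ofReal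
    ((intervalIntegrable_iff_integrableOn_Ioo_of_le hab).1 hf)
    (ae_restrict_of_forall_mem measurableSet_Ioo hf₀)

theorem measurable_intervalIntegral_lowerLimit {f : ℝ → ℝ → ℝ}
    (hf : Measurable (uncurry f)) (t : ℝ) : Measurable fun u => ∫ r in u..t, f u r := by
  have key : ∀ S : Set (ℝ × ℝ), MeasurableSet S →
      Measurable fun u => ∫ r, S.indicator (uncurry f) (u, r) :=
    fun S hS => (hf.indicator hS).stronglyMeasurable.integral_prod_right'.measurable
  convert (key {p | p.1 < p.2 ∧ p.2 ≤ t} ((measurableSet_lt measurable_fst measurable_snd).inter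
    (measurableSet_le measurable_snd measurable_const))).sub
    (key {p | t < p.2 ∧ p.2 ≤ p.1} ((measurableSet_lt measurable_const measurable_snd).inter
    (measurableSet_le measurable_snd measurable_fst))) using 1
  funext u
  simp only [intervalIntegral, ← MeasureTheory.integral_indicator measurableSet_Ioc]
  rfl

section rpow

variable {p v t : ℝ}

theorem intervalIntegrable_sub_rpow (hp : -1 < p) (c d : ℝ) :
    IntervalIntegrable (fun r => (r - c) ^ p) volume c d := by
  simpa using (intervalIntegrable_rpow' hp (a := 0) (b := d - c)).comp_sub_right c

theorem intervalIntegrable_rsub_rpow (hp : -1 < p) (c d : ℝ) :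
    IntervalIntegrable (fun r => (d - r) ^ p) volume c d := by
  simpa using ((intervalIntegrable_rpow' hp (a := 0) (b := d - c)).comp_sub_left d).symm

theorem integral_sub_rpow (hp : -1 < p) (c d : ℝ) :
    ∫ r in c..d, (r - c) ^ p = (d - c) ^ (p + 1) / (p + 1) := by
  simp [integral_comp_sub_right (· ^ p), integral_rpow (Or.inl hp),
    Real.zero_rpow (by linarith : p + 1 ≠ 0)]

theorem integral_rsub_rpow (hp : -1 < p) (c d : ℝ) :
    ∫ r in c..d, (d - r) ^ p = (d - c) ^ (p + 1) / (p + 1) := by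
  simp [integral_comp_sub_left (· ^ p), integral_rpow (Or.inl hp),
    Real.zero_rpow (by linarith : p + 1 ≠ 0)]

theorem eqOn_abs_sub_rpow_left (hv : 0 ≤ v) :
    EqOn (fun r => (v - r) ^ p) (fun r => |v - r| ^ p) (uIcc 0 v) := fun r hr => by
  rw [uIcc_of_le hv] at hr
  simp only [abs_of_nonneg (sub_nonneg.2 hr.2)]

theorem eqOn_abs_sub_rpow_right (hvt : v ≤ t) :
    EqOn (fun r => (r - v) ^ p) (fun r => |v - r| ^ p) (uIcc v t) := fun r hr => by
  rw [uIcc_of_le hvt] at hr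
  simp only [abs_sub_comm v, abs_of_nonneg (sub_nonneg.2 hr.1)]

theorem intervalIntegrable_abs_sub_rpow (hp : -1 < p) (hv : 0 ≤ v) (hvt : v ≤ t) :
    IntervalIntegrable (fun r => |v - r| ^ p) volume 0 t :=
  ((intervalIntegrable_rsub_rpow hp 0 v).congr
      ((eqOn_abs_sub_rpow_left hv).mono uIoc_subset_uIcc)).trans
    ((intervalIntegrable_sub_rpow hp v t).congr
      ((eqOn_abs_sub_rpow_right hvt).mono uIoc_subset_uIcc))

theorem integral_abs_sub_rpow (hp : -1 < p) (hv : 0 ≤ v) (hvt : v ≤ t) :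
    ∫ r in 0..t, |v - r| ^ p = (v ^ (p + 1) + (t - v) ^ (p + 1)) / (p + 1) := by
  have h := intervalIntegrable_abs_sub_rpow hp hv hvt
  have hv' : v ∈ uIcc 0 t := mem_uIcc_of_le hv hvt
  rw [← integral_add_adjacent_intervals (h.mono_set (uIcc_subset_uIcc_left hv'))
      (h.mono_set (uIcc_subset_uIcc_right hv')),
    ← integral_congr (eqOn_abs_sub_rpow_left hv),
    ← integral_congr (eqOn_abs_sub_rpow_right hvt),
    integral_rsub_rpow hp, integral_sub_rpow hp, sub_zero, add_div]

theorem lintegral_lintegral_abs_sub_rpow {q s : ℝ} (hq : 0 < q) (hs : 0 ≤ s) (hst : s ≤ t) :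
    ∫⁻ v in Ioo 0 s, ∫⁻ r in Ioo 0 t, ENNReal.ofReal (|v - r| ^ (q - 1))
      = ENNReal.ofReal ((t ^ (q + 1) + s ^ (q + 1) - (t - s) ^ (q + 1)) / (q * (q + 1))) := by
  have hp : -1 < q - 1 := by linarith
  have hq' : -1 < q := by linarith
  have inner : ∀ v ∈ Ioo 0 s, ∫⁻ r in Ioo 0 t, ENNReal.ofReal (|v - r| ^ (q - 1))
      = ENNReal.ofReal ((v ^ q + (t - v) ^ q) / q) := fun v hv => by
    have hvt := hv.2.le.trans hst
    rw [← ofReal_intervalIntegral_eq_lintegral_Ioo (hs.trans hst)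
        (intervalIntegrable_abs_sub_rpow hp hv.1.le hvt) fun r _ => by positivity,
      integral_abs_sub_rpow hp hv.1.le hvt, sub_add_cancel]
  have hcont : Continuous fun v : ℝ => (t - v) ^ q := by fun_prop (disch := exact hq.le)
  rw [setLIntegral_congr_fun measurableSet_Ioo inner,
    ← ofReal_intervalIntegral_eq_lintegral_Ioo hs
      (((intervalIntegrable_rpow' hq').add (hcont.intervalIntegrable _ _)).div_const _)
      fun v hv => div_nonneg (add_nonneg (Real.rpow_nonneg hv.1.le _)
        (Real.rpow_nonneg (by linarith [hv.2]) _)) hq.le,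
    intervalIntegral.integral_div, intervalIntegral.integral_add (intervalIntegrable_rpow' hq')
      (hcont.intervalIntegrable _ _), integral_comp_sub_left (· ^ q) t,
    integral_rpow (Or.inl hq'), integral_rpow (Or.inl hq'), Real.zero_rpow (by linarith)]
  congr 1
  simp only [sub_zero]
  field_simp
  ring

end rpow

theorem lintegral_beta_integrand {α β : ℝ} (hα : 0 < α) (hβ : 0 < β) :
    ∫⁻ z in Ioo 0 1, ENNReal.ofReal (z ^ (α - 1) * (1 - z) ^ (β - 1))
      = ENNReal.ofReal (beta α β) := by
  have hB := beta_pos hα hβ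
  have h := lintegral_betaPDF_eq_one hα hβ
  simp_rw [lintegral_betaPDF, mul_assoc, ofReal_mul (one_div_pos.2 hB).le] at h
  rw [lintegral_const_mul' _ _ ofReal_ne_top, one_div, ofReal_inv_of_pos hB, mul_comm] at h
  rw [ENNReal.eq_inv_of_mul_eq_one_left h, inv_inv]

theorem betaFun_eq_beta {α β : ℝ} (hα : 0 < α) (hβ : 0 < β) :
    betaFun α β = beta α β := by
  have h₀ : ∀ᵐ z ∂volume.restrict (Ioo (0:ℝ) 1),
      0 ≤ z ^ (α - 1) * (1 - z) ^ (β - 1) :=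
    ae_restrict_of_forall_mem measurableSet_Ioo fun z hz =>
      mul_nonneg (Real.rpow_nonneg hz.1.le _) (Real.rpow_nonneg (sub_nonneg.2 hz.2.le) _)
  rw [betaFun, intervalIntegral.integral_of_le zero_le_one, integral_Ioc_eq_integral_Ioo,
    integral_eq_lintegral_of_nonneg_ae h₀ (by fun_prop), lintegral_beta_integrand hα hβ,
    toReal_ofReal (beta_pos hα hβ).le]

/-- With `u = mobiusSubst v t z` and `D = t - v + v z` one has `v - u = v (t-v) (1-z) / D` and
`t - u = t (t-v) / D`; against the Jacobian `v t (t-v) / D²` all powers of `D` cancel exactly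
when the exponent of `t - u` is `-(α + β)`. -/
noncomputable def mobiusSubst (v t z : ℝ) : ℝ :=
  z * v * t / (t - v + v * z)

section mobiusSubst

variable {v t z : ℝ}

theorem hasDerivAt_mobiusSubst (hD : t - v + v * z ≠ 0) :
    HasDerivAt (mobiusSubst v t) (v * t * (t - v) / (t - v + v * z) ^ 2) z := by
  have := (((hasDerivAt_id z).mul_const v).mul_const t).div
    (((hasDerivAt_id z).const_mul v).const_add (t - v)) hD
  exact this.congr_deriv (by simp only [id]; ring)

theorem denom_mobiusSubst_pos (hv : 0 < v) (hvt : v < t) (hz : z ∈ Ioo (0:ℝ) 1) :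
    0 < t - v + v * z := by
  nlinarith [hz.1]

theorem injOn_mobiusSubst (hv : 0 < v) (hvt : v < t) : InjOn (mobiusSubst v t) (Ioo 0 1) := by
  intro z₁ hz₁ z₂ hz₂ h
  rw [mobiusSubst, mobiusSubst, div_eq_div_iff (denom_mobiusSubst_pos hv hvt hz₁).ne'
    (denom_mobiusSubst_pos hv hvt hz₂).ne'] at h
  have : (z₁ - z₂) * (v * t * (t - v)) = 0 := by linear_combination h
  exact sub_eq_zero.1 ((mul_eq_zero.1 this).resolve_right
    (mul_pos (mul_pos hv (hv.trans hvt)) (sub_pos.2 hvt)).ne')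

theorem image_mobiusSubst_Ioo (hv : 0 < v) (hvt : v < t) :
    mobiusSubst v t '' Ioo 0 1 = Ioo 0 v := by
  have ht : 0 < t := hv.trans hvt
  have htv : 0 < t - v := sub_pos.2 hvt
  refine Subset.antisymm ?_ fun u ⟨hu0, huv⟩ => ?_
  · rintro _ ⟨z, hz, rfl⟩
    have hD := denom_mobiusSubst_pos hv hvt hz
    refine ⟨div_pos (by have := hz.1; positivity) hD, (div_lt_iff₀ hD).2 ?_⟩
    nlinarith [mul_pos (mul_pos hv htv) (sub_pos.2 hz.2)]
  · have htu : 0 < t - u := by linarith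
    refine ⟨u * (t - v) / (v * (t - u)), ⟨by positivity, ?_⟩, ?_⟩
    · rw [div_lt_one (by positivity)]
      nlinarith [mul_pos (sub_pos.2 huv) ht]
    · rw [mobiusSubst]
      field_simp
      ring

theorem deriv_mul_rpow_mobiusSubst {α β : ℝ} (hv : 0 < v) (hvt : v < t)
    (hz : z ∈ Ioo (0:ℝ) 1) :
    v * t * (t - v) / (t - v + v * z) ^ 2 * (mobiusSubst v t z ^ (α - 1)
        * (v - mobiusSubst v t z) ^ (β - 1) * (t - mobiusSubst v t z) ^ (-(α + β)))
      = v ^ (α + β - 1) * t ^ (-β) * (t - v) ^ (-α) * (z ^ (α - 1) * (1 - z) ^ (β - 1)) := by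
  obtain ⟨hz0, hz1⟩ := hz
  have ht : 0 < t := hv.trans hvt
  have htv : 0 < t - v := sub_pos.2 hvt
  have h1z : 0 < 1 - z := sub_pos.2 hz1
  have hD := denom_mobiusSubst_pos hv hvt ⟨hz0, hz1⟩
  have e1 : v - mobiusSubst v t z = v * (t - v) * (1 - z) / (t - v + v * z) := by
    rw [mobiusSubst]; field_simp; ring
  have e2 : t - mobiusSubst v t z = t * (t - v) / (t - v + v * z) := by
    rw [mobiusSubst]; field_simp; ring
  rw [e1, e2, mobiusSubst]
  refine Real.log_injOn_pos (by simp only [mem_Ioi]; positivity)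
    (by simp only [mem_Ioi]; positivity) ?_
  simp (disch := positivity) only [Real.log_mul, Real.log_div, Real.log_rpow, Real.log_pow]
  ring

theorem lintegral_Ioo_rpow_mul_rpow_mul_rpow {α β : ℝ} (hv : 0 < v) (hvt : v < t) :
    ∫⁻ u in Ioo 0 v, ENNReal.ofReal (u ^ (α - 1) * (v - u) ^ (β - 1) * (t - u) ^ (-(α + β)))
      = ENNReal.ofReal (v ^ (α + β - 1) * t ^ (-β) * (t - v) ^ (-α))
          * ∫⁻ z in Ioo 0 1, ENNReal.ofReal (z ^ (α - 1) * (1 - z) ^ (β - 1)) := by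
  rw [← image_mobiusSubst_Ioo hv hvt, lintegral_image_eq_lintegral_abs_deriv_mul measurableSet_Ioo
      (fun z hz => (hasDerivAt_mobiusSubst (denom_mobiusSubst_pos hv hvt hz).ne').hasDerivWithinAt)
      (injOn_mobiusSubst hv hvt),
    ← lintegral_const_mul' _ _ ofReal_ne_top]
  refine setLIntegral_congr_fun measurableSet_Ioo fun z hz => ?_
  have := denom_mobiusSubst_pos hv hvt hz
  have := hv.trans hvt
  have := sub_pos.2 hvt
  rw [← ofReal_mul (abs_nonneg _), ← ofReal_mul (by positivity), abs_of_pos (by positivity),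
    deriv_mul_rpow_mobiusSubst hv hvt hz]

end mobiusSubst

theorem lintegral_nested_eq_lintegral_indicator {A : Set ℝ} {B : ℝ → Set ℝ}
    {C : ℝ → ℝ → Set ℝ} (hA : MeasurableSet A) (hB : ∀ x, MeasurableSet (B x))
    (hC : ∀ x y, MeasurableSet (C x y)) (f : ℝ → ℝ → ℝ → ℝ≥0∞) :
    ∫⁻ x in A, ∫⁻ y in B x, ∫⁻ z in C x y, f x y z
      = ∫⁻ x, ∫⁻ y, ∫⁻ z,
          {p : ℝ × ℝ × ℝ | p.1 ∈ A ∧ p.2.1 ∈ B p.1 ∧ p.2.2 ∈ C p.1 p.2.1}.indicator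
            (fun p => f p.1 p.2.1 p.2.2) (x, y, z) := by
  classical
  rw [← lintegral_indicator hA]
  refine lintegral_congr fun x => ?_
  by_cases hx : x ∈ A
  · rw [indicator_of_mem hx, ← lintegral_indicator (hB x)]
    refine lintegral_congr fun y => ?_
    by_cases hy : y ∈ B x
    · rw [indicator_of_mem hy, ← lintegral_indicator (hC x y)]
      refine lintegral_congr fun z => ?_
      simp [indicator_apply, hx, hy]
    · simp [hy]
  · simp [hx]

theorem lintegral_Ioo_nested_swap (f : ℝ → ℝ → ℝ → ℝ≥0∞)
    (hf : Measurable fun p : ℝ × ℝ × ℝ => f p.1 p.2.1 p.2.2) (c s t : ℝ) :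
    ∫⁻ u in Ioo c s, ∫⁻ v in Ioo u s, ∫⁻ r in Ioo u t, f u v r
      = ∫⁻ v in Ioo c s, ∫⁻ r in Ioo c t, ∫⁻ u in Ioo c (min v r), f u v r := by
  set E := {p : ℝ × ℝ × ℝ | p.1 ∈ Ioo c s ∧ p.2.1 ∈ Ioo p.1 s ∧ p.2.2 ∈ Ioo p.1 t}
  have hE : MeasurableSet E := by
    simp only [E, mem_Ioo, ofPred_and]
    measurability
  have hE' : ∀ v r u, {p : ℝ × ℝ × ℝ | p.1 ∈ Ioo c s ∧ p.2.1 ∈ Ioo c t ∧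
      p.2.2 ∈ Ioo c (min p.1 p.2.1)}.indicator (fun p => f p.2.2 p.1 p.2.1) (v, r, u)
      = E.indicator (fun p => f p.1 p.2.1 p.2.2) (u, v, r) := by
    classical
    intro v r u
    simp only [E, indicator_apply, mem_ofPred_eq, mem_Ioo, lt_min_iff]
    grind
  have hg := hf.indicator hE
  rw [lintegral_nested_eq_lintegral_indicator measurableSet_Ioo (fun _ => measurableSet_Ioo)
      (fun _ _ => measurableSet_Ioo), lintegral_nested_eq_lintegral_indicator measurableSet_Ioo
      (fun _ => measurableSet_Ioo) (fun _ _ => measurableSet_Ioo)]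
  simp only [hE']
  rw [lintegral_lintegral_swap (hg.comp (f := fun p : (ℝ × ℝ) × ℝ => (p.1.1, p.1.2, p.2))
      (by fun_prop)).lintegral_prod_right'.aemeasurable]
  refine lintegral_congr fun v => ?_
  exact lintegral_lintegral_swap
    (hg.comp (f := fun p : ℝ × ℝ => (p.1, v, p.2)) (by fun_prop)).aemeasurable

theorem lintegral_Ioo_min_eq_beta_mul_abs_sub_rpow {a v r : ℝ} (ha : 0 < a) (ha' : a < 1 / 2)
    (hv : 0 < v) (hr : 0 < r) (hvr : v ≠ r) :
    ∫⁻ u in Ioo 0 (min v r), ENNReal.ofReal (u ^ (-(2 * a)))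
        * ENNReal.ofReal ((v - u) ^ (a - 1) * v ^ a) * ENNReal.ofReal ((r - u) ^ (a - 1) * r ^ a)
      = ENNReal.ofReal (beta (1 - 2 * a) a * |v - r| ^ (2 * a - 1)) := by
  wlog h : v < r generalizing v r
  · rw [min_comm, abs_sub_comm, ← this hr hv hvr.symm (hvr.symm.lt_of_le (not_lt.1 h))]
    simp only [mul_right_comm]
  have hint : ∀ u ∈ Ioo 0 v, ENNReal.ofReal (u ^ (-(2 * a)))
      * ENNReal.ofReal ((v - u) ^ (a - 1) * v ^ a) * ENNReal.ofReal ((r - u) ^ (a - 1) * r ^ a)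
      = ENNReal.ofReal (v ^ a * r ^ a) * ENNReal.ofReal
          (u ^ ((1 - 2 * a) - 1) * (v - u) ^ (a - 1) * (r - u) ^ (-((1 - 2 * a) + a))) := by
    intro u ⟨hu, huv⟩
    have : 0 < v - u := sub_pos.2 huv
    have : 0 < r - u := by linarith
    rw [← ofReal_mul (by positivity), ← ofReal_mul (by positivity),
      ← ofReal_mul (by positivity), show (1 - 2 * a) - 1 = -(2 * a) by ring,
      show -((1 - 2 * a) + a) = a - 1 by ring]
    congr 1
    ring
  rw [min_eq_left h.le, setLIntegral_congr_fun measurableSet_Ioo hint,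
    lintegral_const_mul' _ _ ofReal_ne_top, lintegral_Ioo_rpow_mul_rpow_mul_rpow hv h,
    lintegral_beta_integrand (by linarith) ha, ← ofReal_mul (by positivity),
    ← ofReal_mul (by positivity), abs_sub_comm, abs_of_pos (sub_pos.2 h),
    show (1 - 2 * a) + a - 1 = -a by ring, show -(1 - 2 * a) = 2 * a - 1 by ring,
    Real.rpow_neg hv.le, Real.rpow_neg hr.le]
  have := hv.trans h
  field_simp

noncomputable def fbmInnerIntegral (a t u : ℝ) : ℝ :=
  ∫ r in u..t, (r - u) ^ (a - 1) * r ^ a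

section fbmInnerIntegral

variable {a s t u : ℝ}

@[fun_prop]
theorem measurable_fbmInnerIntegral (a t : ℝ) : Measurable (fbmInnerIntegral a t) :=
  measurable_intervalIntegral_lowerLimit (by fun_prop) t

theorem fbmInnerIntegral_nonneg (hu : 0 ≤ u) (hut : u ≤ t) : 0 ≤ fbmInnerIntegral a t u :=
  integral_nonneg hut fun _ hr =>
    mul_nonneg (Real.rpow_nonneg (sub_nonneg.2 hr.1) _) (Real.rpow_nonneg (hu.trans hr.1) _)

theorem ofReal_fbmInnerIntegral (ha : 0 < a) (hu : 0 ≤ u) (hut : u ≤ t) :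
    ENNReal.ofReal (fbmInnerIntegral a t u)
      = ∫⁻ r in Ioo u t, ENNReal.ofReal ((r - u) ^ (a - 1) * r ^ a) :=
  ofReal_intervalIntegral_eq_lintegral_Ioo hut
    ((intervalIntegrable_sub_rpow (by linarith) u t).mul_continuousOn
      (Real.continuous_rpow_const ha.le).continuousOn)
    fun _ hr => mul_nonneg (Real.rpow_nonneg (sub_nonneg.2 hr.1.le) _)
      (Real.rpow_nonneg (hu.trans hr.1.le) _)

theorem lintegral_fbmInnerIntegral_mul (ha : 0 < a) (ha' : a < 1 / 2) (hs : 0 ≤ s)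
    (hst : s ≤ t) :
    ∫⁻ u in Ioo 0 s, ENNReal.ofReal
        (u ^ (-(2 * a)) * fbmInnerIntegral a s u * fbmInnerIntegral a t u)
      = ENNReal.ofReal (beta (1 - 2 * a) a *
          ((t ^ (2 * a + 1) + s ^ (2 * a + 1) - (t - s) ^ (2 * a + 1))
            / (2 * a * (2 * a + 1)))) := by
  have hsplit : ∀ u ∈ Ioo 0 s,
      ENNReal.ofReal (u ^ (-(2 * a)) * fbmInnerIntegral a s u * fbmInnerIntegral a t u)
        = ∫⁻ v in Ioo u s, ∫⁻ r in Ioo u t, ENNReal.ofReal (u ^ (-(2 * a)))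
            * ENNReal.ofReal ((v - u) ^ (a - 1) * v ^ a)
            * ENNReal.ofReal ((r - u) ^ (a - 1) * r ^ a) := by
    intro u ⟨hu, hus⟩
    rw [ofReal_mul (by have := fbmInnerIntegral_nonneg (a := a) hu.le hus.le; positivity),
      ofReal_mul (by positivity), ofReal_fbmInnerIntegral ha hu.le hus.le,
      ← lintegral_const_mul' _ _ ofReal_ne_top, ← lintegral_mul_const' _ _ ofReal_ne_top]
    refine lintegral_congr fun v => ?_
    rw [ofReal_fbmInnerIntegral ha hu.le (hus.le.trans hst),
      ← lintegral_const_mul _ (by fun_prop)]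
  have hB := beta_pos (by linarith : 0 < 1 - 2 * a) ha
  rw [setLIntegral_congr_fun measurableSet_Ioo hsplit, lintegral_Ioo_nested_swap _ (by fun_prop),
    ofReal_mul hB.le, ← lintegral_lintegral_abs_sub_rpow (by positivity) hs hst,
    ← lintegral_const_mul' _ _ ofReal_ne_top]
  refine setLIntegral_congr_fun measurableSet_Ioo fun v hv => ?_
  rw [← lintegral_const_mul' _ _ ofReal_ne_top]
  refine lintegral_congr_ae ?_
  -- the diagonal `r = v`, where the Beta formula fails, is a null set
  have hdiag : ∀ᵐ r ∂volume.restrict (Ioo 0 t), r ≠ v :=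
    ae_restrict_of_ae (measure_eq_zero_iff_ae_notMem.1 (measure_singleton v))
  filter_upwards [ae_restrict_mem measurableSet_Ioo, hdiag] with r hr hrv
  rw [lintegral_Ioo_min_eq_beta_mul_abs_sub_rpow ha ha' hv.1 hr.1 hrv.symm, ofReal_mul hB.le]

theorem integral_fbmInnerIntegral_mul (ha : 0 < a) (ha' : a < 1 / 2) (hs : 0 ≤ s)
    (hst : s ≤ t) :
    ∫ u in Ioo 0 s, u ^ (-(2 * a)) * fbmInnerIntegral a s u * fbmInnerIntegral a t u
      = beta (1 - 2 * a) a *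
          ((t ^ (2 * a + 1) + s ^ (2 * a + 1) - (t - s) ^ (2 * a + 1))
            / (2 * a * (2 * a + 1))) := by
  have hnonneg : ∀ᵐ u ∂volume.restrict (Ioo 0 s),
      0 ≤ u ^ (-(2 * a)) * fbmInnerIntegral a s u * fbmInnerIntegral a t u :=
    ae_restrict_of_forall_mem measurableSet_Ioo fun u ⟨hu, hus⟩ =>
      mul_nonneg (mul_nonneg (Real.rpow_nonneg hu.le _) (fbmInnerIntegral_nonneg hu.le hus.le))
        (fbmInnerIntegral_nonneg hu.le (hus.le.trans hst))
  have hR : (t - s) ^ (2 * a + 1) ≤ t ^ (2 * a + 1) :=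
    Real.rpow_le_rpow (sub_nonneg.2 hst) (sub_le_self t hs) (by positivity)
  have := Real.rpow_nonneg hs (2 * a + 1)
  have := beta_pos (by linarith : 0 < 1 - 2 * a) ha
  rw [integral_eq_lintegral_of_nonneg_ae hnonneg (by fun_prop),
    lintegral_fbmInnerIntegral_mul ha ha' hs hst,
    toReal_ofReal (mul_nonneg this.le (div_nonneg (by linarith) (by positivity)))]

end fbmInnerIntegral

theorem fbmKernel_eq (H t u : ℝ) :
    fbmKernel H t u = Real.sqrt (H * (2 * H - 1) / betaFun (2 - 2 * H) (H - 1 / 2))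
      * u ^ (-(H - 1 / 2)) * fbmInnerIntegral (H - 1 / 2) t u :=
  rfl

theorem fbmKernel_mul_fbmKernel {H s t u : ℝ} (hH : 1 / 2 < H) (hH1 : H < 1) (hu : 0 ≤ u) :
    fbmKernel H t u * fbmKernel H s u
      = H * (2 * H - 1) / betaFun (2 - 2 * H) (H - 1 / 2) * (u ^ (-(2 * (H - 1 / 2)))
          * fbmInnerIntegral (H - 1 / 2) s u * fbmInnerIntegral (H - 1 / 2) t u) := by
  have hB : 0 < betaFun (2 - 2 * H) (H - 1 / 2) := by
    rw [betaFun_eq_beta (by linarith) (by linarith)]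
    exact beta_pos (by linarith) (by linarith)
  have hc : 0 ≤ H * (2 * H - 1) / betaFun (2 - 2 * H) (H - 1 / 2) :=
    div_nonneg (mul_nonneg (by linarith) (by linarith)) hB.le
  have hu2 : u ^ (-(2 * (H - 1 / 2))) = u ^ (-(H - 1 / 2)) * u ^ (-(H - 1 / 2)) := by
    rw [← Real.rpow_add' hu (by linarith)]
    congr 1
    ring
  rw [fbmKernel_eq, fbmKernel_eq, hu2]
  linear_combination (u ^ (-(H - 1 / 2)) * u ^ (-(H - 1 / 2)) * fbmInnerIntegral (H - 1 / 2) s u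
    * fbmInnerIntegral (H - 1 / 2) t u) * Real.mul_self_sqrt hc

/-- For `H ∈ (1/2, 1)` the kernel `K_H` reproduces the covariance of
fractional Brownian motion: `∫_0^s K_H(t,u) K_H(s,u) du = R_H(t,s)`
for `0 < s ≤ t`. -/
theorem fbmKernel_reproduces_covariance
    (H : ℝ) (hH : 1 / 2 < H) (hH1 : H < 1)
    (s t : ℝ) (hs : 0 < s) (hst : s ≤ t) :
    ∫ u in (0:ℝ)..s, fbmKernel H t u * fbmKernel H s u
      = (t ^ (2 * H) + s ^ (2 * H) - (t - s) ^ (2 * H)) / 2 := by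
  have ha : 0 < H - 1 / 2 := by linarith
  rw [integral_congr fun u hu => fbmKernel_mul_fbmKernel hH hH1 (uIcc_of_le hs.le ▸ hu).1,
    intervalIntegral.integral_const_mul, intervalIntegral.integral_of_le hs.le,
    integral_Ioc_eq_integral_Ioo, integral_fbmInnerIntegral_mul ha (by linarith) hs.le hst,
    show 2 - 2 * H = 1 - 2 * (H - 1 / 2) by ring, betaFun_eq_beta (by linarith) ha]
  have hB := beta_pos (by linarith : 0 < 1 - 2 * (H - 1 / 2)) ha
  generalize beta (1 - 2 * (H - 1 / 2)) (H - 1 / 2) = B at hB ⊢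
  rw [show 2 * (H - 1 / 2) + 1 = 2 * H by ring, show 2 * (H - 1 / 2) = 2 * H - 1 by ring]
  have : H * 2 - 1 ≠ 0 := ne_of_gt (by linarith)
  field_simp
end

section
/- Let α ∈ (0,1) and L, M > 0, and let h, σ : [0,1] → ℝ be measurable functions with |h| ≤ L and |σ| ≤ M. For 0 < v < s ≤ 1 define g₁(s,v) = ∫_v^s ∫_v^r (s−r)^{α−1} r^α h(r) σ(v) (u−v)^{−α} du dr. Then the iterated integral converges absolutely and |g₁(s,v)| ≤ (L M / (1−α)) B(α, 2−α) s^α (s−v), where B denotes the Beta function. In particular, for every fixed s ∈ (0,1], g₁(s,v) → 0 as v → s⁻. -/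
/-! The inner integral is explicit, `∫_v^r (u-v)^{-α} du = (r-v)^{1-α}/(1-α)`, so
`g₁(s,v) = ∫_v^s c(r) (s-r)^{α-1} (r-v)^{1-α} dr` with `|c(r)| ≤ L M s^α/(1-α)`.
The substitution `r = s - (s-v) y` turns `∫_v^s (s-r)^{α-1} (r-v)^{1-α} dr` into
`(s-v) B(α, 2-α)`, and the factor `s - v` makes `g₁` vanish on the diagonal. -/

open MeasureTheory Set intervalIntegral Filter Topology

/-- The kernel `g₁` from the singular-case Onsager–Machlup computation. -/
noncomputable def g₁ (α : ℝ) (h σ : ℝ → ℝ) (s v : ℝ) : ℝ :=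
  ∫ r in v..s, ∫ u in v..r, (s - r) ^ (α - 1) * r ^ α * h r * σ v * (u - v) ^ (-α)

lemma intervalIntegrable_rpow_sub_const {p : ℝ} (hp : -1 < p) (v r : ℝ) :
    IntervalIntegrable (fun u => (u - v) ^ p) volume v r := by
  simpa using (intervalIntegrable_rpow' hp (a := 0) (b := r - v)).comp_sub_right v

lemma integral_rpow_sub_const {p : ℝ} (hp : -1 < p) (v r : ℝ) :
    ∫ u in v..r, (u - v) ^ p = (r - v) ^ (p + 1) / (p + 1) := by
  rw [integral_comp_sub_right (fun u => u ^ p), sub_self, integral_rpow (Or.inl hp),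
    Real.zero_rpow (by linarith), sub_zero]

lemma intervalIntegrable_sub_rpow_mul_rpow_sub {a b : ℝ} (ha : 0 < a) (hb : 1 ≤ b) (v s : ℝ) :
    IntervalIntegrable (fun r => (s - r) ^ (a - 1) * (r - v) ^ (b - 1)) volume v s := by
  have hsing : IntervalIntegrable (fun r => (s - r) ^ (a - 1)) volume v s := by
    simpa using (intervalIntegrable_rpow' (by linarith : -1 < a - 1)
      (a := s - v) (b := 0)).comp_sub_left s
  exact hsing.mul_continuousOn
    ((Real.continuous_rpow_const (by linarith)).comp (continuous_sub_right v)).continuousOn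

lemma integral_sub_rpow_mul_rpow_sub {a b v s : ℝ} (hvs : v < s) :
    ∫ r in v..s, (s - r) ^ (a - 1) * (r - v) ^ (b - 1) = (s - v) ^ (a + b - 1) * betaFun a b := by
  have hsv : 0 < s - v := sub_pos.2 hvs
  have hsubst := smul_integral_comp_sub_mul (a := 0) (b := 1)
    (fun r => (s - r) ^ (a - 1) * (r - v) ^ (b - 1)) (s - v) s
  simp only [mul_one, mul_zero, sub_sub_cancel, sub_zero, smul_eq_mul] at hsubst
  rw [← hsubst, betaFun, ← intervalIntegral.integral_const_mul,
    ← intervalIntegral.integral_const_mul]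
  refine integral_congr fun y hy => ?_
  rw [uIcc_of_le zero_le_one] at hy
  have hr : s - (s - v) * y - v = (s - v) * (1 - y) := by ring
  simp only [hr]
  rw [Real.mul_rpow hsv.le hy.1, Real.mul_rpow hsv.le (sub_nonneg.2 hy.2),
    show a + b - 1 = 1 + (a - 1) + (b - 1) by ring, Real.rpow_add hsv, Real.rpow_add hsv,
    Real.rpow_one]
  ring

section Bounds

variable {c F : ℝ → ℝ} {a b C : ℝ}

lemma IntervalIntegrable.mul_of_abs_le (hab : a ≤ b) (hF : IntervalIntegrable F volume a b)
    (hc : Measurable c) (hcC : ∀ x ∈ Icc a b, |c x| ≤ C) :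
    IntervalIntegrable (fun x => c x * F x) volume a b := by
  rw [intervalIntegrable_iff, uIoc_of_le hab] at hF ⊢
  exact hF.bdd_mul hc.aestronglyMeasurable
    (ae_restrict_of_forall_mem measurableSet_Ioc fun x hx => hcC x (Ioc_subset_Icc_self hx))

lemma abs_integral_mul_le (hab : a ≤ b) (hF : IntervalIntegrable F volume a b)
    (hF0 : ∀ x ∈ Icc a b, 0 ≤ F x) (hcC : ∀ x ∈ Icc a b, |c x| ≤ C) :
    |∫ x in a..b, c x * F x| ≤ C * ∫ x in a..b, F x := by
  rw [← intervalIntegral.integral_const_mul, ← Real.norm_eq_abs]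
  refine norm_integral_le_of_norm_le hab (ae_of_all _ fun x hx => ?_) (hF.const_mul C)
  have hx' : x ∈ Icc a b := Ioc_subset_Icc_self hx
  rw [Real.norm_eq_abs, abs_mul, abs_of_nonneg (hF0 x hx')]
  exact mul_le_mul_of_nonneg_right (hcC x hx') (hF0 x hx')

end Bounds

lemma tendsto_nhdsLT_zero_of_abs_le_mul_sub {f : ℝ → ℝ} {s K : ℝ}
    (hf : ∀ᶠ v in 𝓝[<] s, |f v| ≤ K * (s - v)) : Tendsto f (𝓝[<] s) (𝓝 0) := by
  have hlin : Tendsto (fun v => K * (s - v)) (𝓝[<] s) (𝓝 0) := by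
    have hcont : Continuous fun v : ℝ => K * (s - v) := by fun_prop
    simpa using (hcont.tendsto s).mono_left nhdsWithin_le_nhds
  exact squeeze_zero_norm' hf hlin

section Kernel

variable {α L M s v : ℝ} {h σ : ℝ → ℝ}

lemma g₁_inner_eq (hα1 : α < 1) (r : ℝ) :
    ∫ u in v..r, (s - r) ^ (α - 1) * r ^ α * h r * σ v * (u - v) ^ (-α)
      = r ^ α * h r * σ v / (1 - α) * ((s - r) ^ (α - 1) * (r - v) ^ (1 - α)) := by
  rw [intervalIntegral.integral_const_mul, integral_rpow_sub_const (by linarith),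
    show -α + 1 = 1 - α by ring]
  ring

lemma abs_g₁_coeff_le (hα0 : 0 ≤ α) (hα1 : α < 1) (hv : 0 ≤ v)
    (hh : ∀ r ∈ Icc v s, |h r| ≤ L) (hσv : |σ v| ≤ M) :
    ∀ r ∈ Icc v s, |r ^ α * h r * σ v / (1 - α)| ≤ s ^ α * L * M / (1 - α) := by
  intro r hr
  have hr0 : 0 ≤ r := hv.trans hr.1
  rw [abs_div, abs_of_pos (sub_pos.2 hα1), abs_mul, abs_mul, abs_of_nonneg (by positivity)]
  have hL : 0 ≤ L := (abs_nonneg _).trans (hh r hr)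
  have hs0 : 0 ≤ s := hr0.trans hr.2
  gcongr
  exacts [hr.2, hh r hr]

lemma intervalIntegrable_g₁_inner (hα0 : 0 < α) (hα1 : α < 1) (hmh : Measurable h)
    (hv : 0 ≤ v) (hvs : v ≤ s) (hh : ∀ r ∈ Icc v s, |h r| ≤ L) (hσv : |σ v| ≤ M) :
    IntervalIntegrable
      (fun r => ∫ u in v..r, (s - r) ^ (α - 1) * r ^ α * h r * σ v * (u - v) ^ (-α))
      volume v s := by
  simp only [g₁_inner_eq hα1]
  have hkernel := intervalIntegrable_sub_rpow_mul_rpow_sub hα0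
    (by linarith : 1 ≤ 2 - α) v s
  rw [show 2 - α - 1 = 1 - α by ring] at hkernel
  exact hkernel.mul_of_abs_le hvs (by fun_prop) (abs_g₁_coeff_le hα0.le hα1 hv hh hσv)

lemma abs_g₁_le (hα0 : 0 < α) (hα1 : α < 1) (hv : 0 ≤ v) (hvs : v < s)
    (hh : ∀ r ∈ Icc v s, |h r| ≤ L) (hσv : |σ v| ≤ M) :
    |g₁ α h σ s v| ≤ L * M / (1 - α) * betaFun α (2 - α) * s ^ α * (s - v) := by
  have hkernel := intervalIntegrable_sub_rpow_mul_rpow_sub hα0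
    (by linarith : 1 ≤ 2 - α) v s
  have hbeta := integral_sub_rpow_mul_rpow_sub (a := α) (b := 2 - α) hvs
  rw [show 2 - α - 1 = 1 - α by ring] at hkernel hbeta
  rw [show α + (2 - α) - 1 = 1 by ring, Real.rpow_one] at hbeta
  have hkernel0 : ∀ r ∈ Icc v s, 0 ≤ (s - r) ^ (α - 1) * (r - v) ^ (1 - α) := fun r hr =>
    mul_nonneg (Real.rpow_nonneg (sub_nonneg.2 hr.2) _) (Real.rpow_nonneg (sub_nonneg.2 hr.1) _)
  simp only [g₁, g₁_inner_eq hα1]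
  calc _ ≤ s ^ α * L * M / (1 - α) * ∫ r in v..s, (s - r) ^ (α - 1) * (r - v) ^ (1 - α) :=
        abs_integral_mul_le hvs.le hkernel hkernel0 (abs_g₁_coeff_le hα0.le hα1 hv hh hσv)
    _ = L * M / (1 - α) * betaFun α (2 - α) * s ^ α * (s - v) := by rw [hbeta]; ring

end Kernel

theorem g₁_bound_general
    (α L M : ℝ) (hα0 : 0 < α) (hα1 : α < 1)
    (h σ : ℝ → ℝ) (hmh : Measurable h)
    (hh : ∀ x ∈ Icc (0:ℝ) 1, |h x| ≤ L) (hσ : ∀ x ∈ Icc (0:ℝ) 1, |σ x| ≤ M) :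
    (∀ v s : ℝ, 0 < v → v < s → s ≤ 1 →
      (∀ r ∈ Ioo v s,
        IntervalIntegrable
          (fun u => (s - r) ^ (α - 1) * r ^ α * h r * σ v * (u - v) ^ (-α))
          volume v r) ∧
      IntervalIntegrable
        (fun r => ∫ u in v..r,
            (s - r) ^ (α - 1) * r ^ α * h r * σ v * (u - v) ^ (-α))
        volume v s ∧
      |g₁ α h σ s v| ≤ L * M / (1 - α) * betaFun α (2 - α) * s ^ α * (s - v)) ∧
    ∀ s ∈ Ioc (0:ℝ) 1,
      Tendsto (fun v => g₁ α h σ s v) (nhdsWithin s (Iio s)) (nhds 0) := by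
  have hh_Icc : ∀ v s, 0 < v → s ≤ 1 → ∀ r ∈ Icc v s, |h r| ≤ L := fun v s hv hs r hr =>
    hh r ⟨hv.le.trans hr.1, hr.2.trans hs⟩
  have hσ_at : ∀ v s, 0 < v → v < s → s ≤ 1 → |σ v| ≤ M := fun v s hv hvs hs =>
    hσ v ⟨hv.le, by linarith⟩
  have hbound : ∀ v s, 0 < v → v < s → s ≤ 1 →
      |g₁ α h σ s v| ≤ L * M / (1 - α) * betaFun α (2 - α) * s ^ α * (s - v) :=
    fun v s hv hvs hs => abs_g₁_le hα0 hα1 hv.le hvs (hh_Icc v s hv hs) (hσ_at v s hv hvs hs)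
  refine ⟨fun v s hv hvs hs => ⟨fun r _ => ?_, ?_, hbound v s hv hvs hs⟩, fun s hs => ?_⟩
  · exact (intervalIntegrable_rpow_sub_const (by linarith) v r).const_mul _
  · exact intervalIntegrable_g₁_inner hα0 hα1 hmh hv.le hvs.le (hh_Icc v s hv hs)
      (hσ_at v s hv hvs hs)
  · refine tendsto_nhdsLT_zero_of_abs_le_mul_sub
      (K := L * M / (1 - α) * betaFun α (2 - α) * s ^ α) ?_
    filter_upwards [Ioo_mem_nhdsLT hs.1] with v hv
    exact hbound v s hv.1 hv.2 hs.2

/-- For `α ∈ (0,1)`, `|h| ≤ L`, `|σ| ≤ M`, the kernel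
`g₁(s,v) = ∫_v^s ∫_v^r (s-r)^{α-1} r^α h(r) σ(v) (u-v)^{-α} du dr`
converges absolutely and satisfies
`|g₁(s,v)| ≤ (L M/(1-α)) B(α, 2-α) s^α (s-v)`; in particular it vanishes on
the diagonal. -/
theorem g₁_bound
    (α L M : ℝ) (hα0 : 0 < α) (hα1 : α < 1) (hL : 0 < L) (hM : 0 < M)
    (h σ : ℝ → ℝ) (hmh : Measurable h) (hmσ : Measurable σ)
    (hh : ∀ x ∈ Icc (0:ℝ) 1, |h x| ≤ L) (hσ : ∀ x ∈ Icc (0:ℝ) 1, |σ x| ≤ M) :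
    (∀ v s : ℝ, 0 < v → v < s → s ≤ 1 →
      (∀ r ∈ Ioo v s,
        IntervalIntegrable
          (fun u => (s - r) ^ (α - 1) * r ^ α * h r * σ v * (u - v) ^ (-α))
          volume v r) ∧
      IntervalIntegrable
        (fun r => ∫ u in v..r,
            (s - r) ^ (α - 1) * r ^ α * h r * σ v * (u - v) ^ (-α))
        volume v s ∧
      |g₁ α h σ s v| ≤ L * M / (1 - α) * betaFun α (2 - α) * s ^ α * (s - v)) ∧
    ∀ s ∈ Ioc (0:ℝ) 1,
      Tendsto (fun v => g₁ α h σ s v) (nhdsWithin s (Iio s)) (nhds 0) :=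
  g₁_bound_general α L M hα0 hα1 h σ hmh hh hσ
end

section
/- Let α ∈ (0,1/2) and L, M > 0, and let h, σ : [0,1] → ℝ be measurable with |h| ≤ L and |σ| ≤ M. Set C_α = ∫_0^1 (y^{−α} − 1)(1−y)^{−(α+1)} dy, which is finite. For 0 < v < s ≤ 1 define g(s,v) = s^α h(s) v^{−α} ( ∫_0^s ( r^{−α} − s^{−α} ) (s−r)^{−(α+1)} dr ) ∫_v^s ∫_v^u (x−v)^{α−1} x^α σ(x) dx du. Then |g(s,v)| ≤ (L M C_α / (α(α+1))) v^{−α} (s−v)^{α+1} for all 0 < v < s ≤ 1. In particular, for every fixed s ∈ (0,1], g(s,v) → 0 as v → s⁻. -/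
/-!
Substituting `r = s y` turns the singular factor into `C_α s^{-2α}`, so that
`g(s,v) = C_α s^{-α} h(s) v^{-α} I(s,v)` with `I` the double integral. Bounding `x^α σ(x)` by
`M s^α` and integrating `(x-v)^{α-1}`, then `(u-v)^α`, gives
`|I| ≤ M s^α (s-v)^{α+1} / (α(α+1))`, and the powers of `s` cancel.
`C_α` is finite because `y ≤ y^α` on `(0,1)` dominates its integrand by `y^{-α}(1-y)^{-α}`.
-/

open MeasureTheory Set intervalIntegral Filter Topology

/-- The constant `C_α = ∫_0^1 (y^{-α} - 1)(1-y)^{-(α+1)} dy`. -/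
noncomputable def Cα (α : ℝ) : ℝ :=
  ∫ y in (0:ℝ)..1, (y ^ (-α) - 1) * (1 - y) ^ (-(α + 1))

/-- The kernel from the regular-case Onsager–Machlup computation involving
the singular factor `∫_0^s (r^{-α} - s^{-α})(s-r)^{-(α+1)} dr`. -/
noncomputable def gKer (α : ℝ) (h σ : ℝ → ℝ) (s v : ℝ) : ℝ :=
  s ^ α * h s * v ^ (-α) *
    (∫ r in (0:ℝ)..s, (r ^ (-α) - s ^ (-α)) * (s - r) ^ (-(α + 1))) *
    ∫ u in v..s, ∫ x in v..u, (x - v) ^ (α - 1) * x ^ α * σ x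

lemma Cα_integrand_nonneg {α y : ℝ} (hα : 0 ≤ α) (hy : y ∈ Ioc (0:ℝ) 1) :
    0 ≤ (y ^ (-α) - 1) * (1 - y) ^ (-(α + 1)) :=
  mul_nonneg
    (sub_nonneg.2 (Real.one_le_rpow_of_pos_of_le_one_of_nonpos hy.1 hy.2 (neg_nonpos.2 hα)))
    (Real.rpow_nonneg (sub_nonneg.2 hy.2) _)

lemma Cα_integrand_le {α y : ℝ} (hα : α ≤ 1) (hy : y ∈ Ioo (0:ℝ) 1) :
    (y ^ (-α) - 1) * (1 - y) ^ (-(α + 1)) ≤ y ^ (-α) * (1 - y) ^ (-α) := by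
  obtain ⟨hy0, hy1⟩ := hy
  have hy1' : 0 < 1 - y := sub_pos.2 hy1
  have hyα : y ≤ y ^ α := by
    simpa using Real.rpow_le_rpow_of_exponent_ge hy0 hy1.le hα
  have hfirst : y ^ (-α) - 1 ≤ y ^ (-α) * (1 - y) := by
    have : y ^ (-α) * y ^ α = 1 := by rw [← Real.rpow_add hy0]; simp
    nlinarith [Real.rpow_nonneg hy0.le (-α)]
  calc (y ^ (-α) - 1) * (1 - y) ^ (-(α + 1))
      ≤ y ^ (-α) * (1 - y) * (1 - y) ^ (-(α + 1)) := by gcongr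
    _ = y ^ (-α) * (1 - y) ^ (-α) := by
      rw [mul_assoc, mul_comm (1 - y), ← Real.rpow_add_one hy1'.ne']
      ring_nf

lemma rpow_neg_mul_one_sub_rpow_neg_le {α y : ℝ} (hα : 0 ≤ α) (hy : y ∈ Ioo (0:ℝ) 1) :
    y ^ (-α) * (1 - y) ^ (-α) ≤ 2 ^ α * (y ^ (-α) + (1 - y) ^ (-α)) := by
  obtain ⟨hy0, hy1⟩ := hy
  have hhalf : ∀ t : ℝ, 1 / 2 ≤ t → t ^ (-α) ≤ 2 ^ α := fun t ht => by
    calc t ^ (-α) ≤ (1 / 2) ^ (-α) := Real.rpow_le_rpow_of_nonpos (by norm_num) ht (by linarith)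
      _ = 2 ^ α := by rw [one_div, Real.inv_rpow zero_le_two, Real.rpow_neg zero_le_two, inv_inv]
  have h₁ := Real.rpow_nonneg hy0.le (-α)
  have h₂ := Real.rpow_nonneg (sub_pos.2 hy1).le (-α)
  rcases le_total y (1 / 2) with hy2 | hy2
  · nlinarith [hhalf (1 - y) (by linarith)]
  · nlinarith [hhalf y hy2]

lemma intervalIntegrable_Cα_integrand {α : ℝ} (hα0 : 0 < α) (hα1 : α < 1) :
    IntervalIntegrable (fun y : ℝ => (y ^ (-α) - 1) * (1 - y) ^ (-(α + 1))) volume 0 1 := by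
  have hdom : IntervalIntegrable (fun y : ℝ => 2 ^ α * (y ^ (-α) + (1 - y) ^ (-α)))
      volume 0 1 := by
    refine (IntervalIntegrable.add ?_ ?_).const_mul _
    · exact intervalIntegrable_rpow' (by linarith)
    · simpa using (intervalIntegrable_rpow' (r := -α) (a := 1) (b := 0)
        (by linarith)).comp_sub_left 1
  rw [intervalIntegrable_iff_integrableOn_Ioo_of_le zero_le_one] at hdom ⊢
  refine hdom.mono' (by fun_prop) ((ae_restrict_mem measurableSet_Ioo).mono fun y hy => ?_)
  rw [Real.norm_of_nonneg (Cα_integrand_nonneg hα0.le (Ioo_subset_Ioc_self hy))]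
  exact (Cα_integrand_le hα1.le hy).trans (rpow_neg_mul_one_sub_rpow_neg_le hα0.le hy)

lemma Cα_nonneg {α : ℝ} (hα : 0 ≤ α) : 0 ≤ Cα α := by
  rw [Cα, intervalIntegral.integral_of_le zero_le_one]
  exact setIntegral_nonneg measurableSet_Ioc fun y hy => Cα_integrand_nonneg hα hy

lemma integral_rpow_neg_sub_mul_rpow_eq {α s : ℝ} (hs : 0 < s) :
    ∫ r in (0:ℝ)..s, (r ^ (-α) - s ^ (-α)) * (s - r) ^ (-(α + 1)) = Cα α * s ^ (-(2 * α)) := by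
  have hscale : ∀ y ∈ uIcc (0:ℝ) 1,
      ((s * y) ^ (-α) - s ^ (-α)) * (s - s * y) ^ (-(α + 1))
        = s ^ (-α) * s ^ (-(α + 1)) * ((y ^ (-α) - 1) * (1 - y) ^ (-(α + 1))) := by
    intro y hy
    rw [uIcc_of_le zero_le_one] at hy
    rw [Real.mul_rpow hs.le hy.1, show s - s * y = s * (1 - y) by ring,
      Real.mul_rpow hs.le (sub_nonneg.2 hy.2)]
    ring
  have hpow : s * (s ^ (-α) * s ^ (-(α + 1))) = s ^ (-(2 * α)) := by
    rw [← Real.rpow_add hs, mul_comm, ← Real.rpow_add_one hs.ne']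
    ring_nf
  have := intervalIntegral.mul_integral_comp_mul_left (a := 0) (b := 1) (c := s)
    (f := fun r : ℝ => (r ^ (-α) - s ^ (-α)) * (s - r) ^ (-(α + 1)))
  simp only [mul_zero, mul_one] at this
  rw [← this, intervalIntegral.integral_congr hscale, intervalIntegral.integral_const_mul,
    ← mul_assoc, hpow, Cα, mul_comm]

lemma norm_integral_le_of_norm_le_mul_rpow_sub {F : ℝ → ℝ} {K β v u : ℝ} (hβ : -1 < β)
    (hvu : v ≤ u) (hF : ∀ x ∈ Ioc v u, ‖F x‖ ≤ K * (x - v) ^ β) :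
    ‖∫ x in v..u, F x‖ ≤ K * (u - v) ^ (β + 1) / (β + 1) := by
  have hint : IntervalIntegrable (fun x : ℝ => K * (x - v) ^ β) volume v u := by
    simpa using
      ((intervalIntegrable_rpow' (a := v - v) (b := u - v) hβ).comp_sub_right v).const_mul K
  refine (intervalIntegral.norm_integral_le_of_norm_le hvu (ae_of_all _ hF) hint).trans_eq ?_
  rw [intervalIntegral.integral_const_mul,
    intervalIntegral.integral_comp_sub_right (fun x => x ^ β), integral_rpow (Or.inl hβ),
    sub_self, Real.zero_rpow (by linarith), sub_zero, mul_div_assoc]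

lemma norm_integral_integral_rpow_sub_mul_le {α M v s : ℝ} {σ : ℝ → ℝ} (hα : 0 < α)
    (hv : 0 ≤ v) (hvs : v ≤ s) (hσ : ∀ x ∈ Ioc v s, |σ x| ≤ M) :
    ‖∫ u in v..s, ∫ x in v..u, (x - v) ^ (α - 1) * x ^ α * σ x‖
      ≤ M * s ^ α * (s - v) ^ (α + 1) / (α * (α + 1)) := by
  have hinner : ∀ u ∈ Ioc v s,
      ‖∫ x in v..u, (x - v) ^ (α - 1) * x ^ α * σ x‖ ≤ M * s ^ α / α * (u - v) ^ α := by
    intro u hu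
    have := norm_integral_le_of_norm_le_mul_rpow_sub (K := M * s ^ α) (β := α - 1)
      (F := fun x => (x - v) ^ (α - 1) * x ^ α * σ x) (by linarith) hu.1.le fun x hx => by
        have hx0 : 0 ≤ x := hv.trans hx.1.le
        have hxs : x ≤ s := hx.2.trans hu.2
        have hσx : |σ x| ≤ M := hσ x ⟨hx.1, hxs⟩
        have hxv : 0 ≤ (x - v) ^ (α - 1) := Real.rpow_nonneg (sub_nonneg.2 hx.1.le) _
        rw [Real.norm_eq_abs, abs_mul, abs_mul, abs_of_nonneg (Real.rpow_nonneg hx0 α),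
          abs_of_nonneg hxv]
        calc (x - v) ^ (α - 1) * x ^ α * |σ x| ≤ (x - v) ^ (α - 1) * s ^ α * M := by
              gcongr
              exact mul_nonneg hxv (Real.rpow_nonneg (hx0.trans hxs) α)
          _ = M * s ^ α * (x - v) ^ (α - 1) := by ring
    simpa [mul_div_right_comm] using this
  refine (norm_integral_le_of_norm_le_mul_rpow_sub (by linarith) hvs hinner).trans_eq ?_
  field_simp

lemma gKer_eq {α s : ℝ} (hs : 0 < s) (h σ : ℝ → ℝ) (v : ℝ) :
    gKer α h σ s v = Cα α * (s ^ α)⁻¹ * h s * v ^ (-α) *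
      ∫ u in v..s, ∫ x in v..u, (x - v) ^ (α - 1) * x ^ α * σ x := by
  have hpow : s ^ α * s ^ (-(2 * α)) = (s ^ α)⁻¹ := by
    rw [← Real.rpow_add hs, ← Real.rpow_neg hs.le]
    ring_nf
  rw [gKer, integral_rpow_neg_sub_mul_rpow_eq hs, ← hpow]
  ring

lemma abs_gKer_le {α L M : ℝ} (hα : 0 < α) {h σ : ℝ → ℝ}
    (hh : ∀ x ∈ Icc (0:ℝ) 1, |h x| ≤ L) (hσ : ∀ x ∈ Icc (0:ℝ) 1, |σ x| ≤ M)
    {v s : ℝ} (hv : 0 < v) (hvs : v < s) (hs1 : s ≤ 1) :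
    |gKer α h σ s v| ≤ L * M * Cα α / (α * (α + 1)) * v ^ (-α) * (s - v) ^ (α + 1) := by
  have hs : 0 < s := hv.trans hvs
  have hhs : |h s| ≤ L := hh s ⟨hs.le, hs1⟩
  have hI := norm_integral_integral_rpow_sub_mul_le hα hv.le hvs.le
    fun x hx => hσ x ⟨hv.le.trans hx.1.le, hx.2.trans hs1⟩
  rw [gKer_eq hs, abs_mul, abs_mul, abs_mul, abs_mul, abs_of_nonneg (Cα_nonneg hα.le),
    abs_of_nonneg (inv_nonneg.2 (Real.rpow_nonneg hs.le α)),
    abs_of_nonneg (Real.rpow_nonneg hv.le _)]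
  calc _ ≤ Cα α * (s ^ α)⁻¹ * L * v ^ (-α) *
          (M * s ^ α * (s - v) ^ (α + 1) / (α * (α + 1))) := by
        have := Cα_nonneg hα.le
        have := (abs_nonneg (h s)).trans hhs
        gcongr
        exact hI
    _ = L * M * Cα α / (α * (α + 1)) * v ^ (-α) * (s - v) ^ (α + 1) := by
        field_simp [(Real.rpow_pos_of_pos hs α).ne']

lemma tendsto_gKer_nhdsLT {α L M : ℝ} (hα : 0 < α) {h σ : ℝ → ℝ}
    (hh : ∀ x ∈ Icc (0:ℝ) 1, |h x| ≤ L) (hσ : ∀ x ∈ Icc (0:ℝ) 1, |σ x| ≤ M)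
    {s : ℝ} (hs : s ∈ Ioc (0:ℝ) 1) :
    Tendsto (fun v => gKer α h σ s v) (𝓝[<] s) (𝓝 0) := by
  set B : ℝ → ℝ := fun v => L * M * Cα α / (α * (α + 1)) * v ^ (-α) * (s - v) ^ (α + 1)
  have hB : ContinuousAt B s := by
    have h₁ : ContinuousAt (fun v : ℝ => v ^ (-α)) s :=
      Real.continuousAt_rpow_const _ _ (Or.inl hs.1.ne')
    have h₂ : ContinuousAt (fun v : ℝ => (s - v) ^ (α + 1)) s :=
      (continuousAt_const.sub continuousAt_id).rpow_const (Or.inr (by linarith))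
    exact (continuousAt_const.mul h₁).mul h₂
  have hBs : B s = 0 := by simp [B, Real.zero_rpow (by linarith : α + 1 ≠ 0)]
  refine squeeze_zero_norm' ?_ (hBs ▸ hB.tendsto.mono_left nhdsWithin_le_nhds)
  filter_upwards [self_mem_nhdsWithin, nhdsWithin_le_nhds (eventually_gt_nhds hs.1)]
    with v hvs hv
  exact abs_gKer_le hα hh hσ hv hvs hs.2

theorem gKer_bound_general
    (α L M : ℝ) (hα0 : 0 < α) (hα1 : α < 1 / 2)
    (h σ : ℝ → ℝ)
    (hh : ∀ x ∈ Icc (0:ℝ) 1, |h x| ≤ L) (hσ : ∀ x ∈ Icc (0:ℝ) 1, |σ x| ≤ M) :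
    IntervalIntegrable (fun y : ℝ => (y ^ (-α) - 1) * (1 - y) ^ (-(α + 1)))
      volume 0 1 ∧
    (∀ v s : ℝ, 0 < v → v < s → s ≤ 1 →
      |gKer α h σ s v|
        ≤ L * M * Cα α / (α * (α + 1)) * v ^ (-α) * (s - v) ^ (α + 1)) ∧
    ∀ s ∈ Ioc (0:ℝ) 1,
      Tendsto (fun v => gKer α h σ s v) (nhdsWithin s (Iio s)) (nhds 0) :=
  ⟨intervalIntegrable_Cα_integrand hα0 (by linarith),
    fun _ _ hv hvs hs1 => abs_gKer_le hα0 hh hσ hv hvs hs1,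
    fun _ hs => tendsto_gKer_nhdsLT hα0 hh hσ hs⟩

/-- For `α ∈ (0,1/2)`, `|h| ≤ L`, `|σ| ≤ M`, the constant `C_α` is finite and
`|g(s,v)| ≤ (L M C_α/(α(α+1))) v^{-α} (s-v)^{α+1}` for `0 < v < s ≤ 1`;
in particular `g` vanishes on the diagonal. -/
theorem gKer_bound
    (α L M : ℝ) (hα0 : 0 < α) (hα1 : α < 1 / 2) (hL : 0 < L) (hM : 0 < M)
    (h σ : ℝ → ℝ) (hmh : Measurable h) (hmσ : Measurable σ)
    (hh : ∀ x ∈ Icc (0:ℝ) 1, |h x| ≤ L) (hσ : ∀ x ∈ Icc (0:ℝ) 1, |σ x| ≤ M) :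
    IntervalIntegrable (fun y : ℝ => (y ^ (-α) - 1) * (1 - y) ^ (-(α + 1)))
      volume 0 1 ∧
    (∀ v s : ℝ, 0 < v → v < s → s ≤ 1 →
      |gKer α h σ s v|
        ≤ L * M * Cα α / (α * (α + 1)) * v ^ (-α) * (s - v) ^ (α + 1)) ∧
    ∀ s ∈ Ioc (0:ℝ) 1,
      Tendsto (fun v => gKer α h σ s v) (nhdsWithin s (Iio s)) (nhds 0) :=
  gKer_bound_general α L M hα0 hα1 h σ hh hσ
end

section
/- Let α ∈ (0,1/2) and L, M > 0, and let h, σ : [0,1] → ℝ be measurable with |h| ≤ L and |σ| ≤ M. For 0 < v < s ≤ 1 define g₅(s,v) = ∫_0^v ∫_v^s ∫_v^u s^α r^{−α} h(r) v^{−α} (x−v)^{α−1} x^α σ(x) (s−r)^{−(α+1)} dx du dr. Then the iterated integral converges absolutely and there is a constant C, depending only on α, L, M, such that |g₅(s,v)| ≤ C v^{−α} s (s−v)^α for all 0 < v < s ≤ 1. In particular, for every fixed s ∈ (0,1], g₅(s,v) → 0 as v → s⁻. -/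
/-!
The integrand factors as `s^α v^{-α} · K(r) · φ(x)` with `K(r) = r^{-α} h(r) (s-r)^{-(α+1)}` and
`φ(x) = (x-v)^{α-1} x^α σ(x)`, so `g₅` is the product of `∫₀^v K` and `∫_v^s ∫_v^u φ`.
Since `|φ(x)| ≤ M s^α (x-v)^{α-1}`, the iterated integral is at most `M s^α (s-v)^{α+1} / α`.
For `r ≤ v` we have `(s-r)^{-(α+1)} ≤ (s-v)^{-1} (s-r)^{-α}`; and since one of `r`, `s - r` is at
least `s/2`, `r^{-α} (s-r)^{-α} ≤ (s/2)^{-α} (r^{-α} + (s-r)^{-α})`, which replaces the Beta integral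
and gives `|∫₀^v K| ≤ 2^{α+1} L s^{1-2α} / ((1-α)(s-v))`. In the product the factor `(s-v)^{-1}`
cancels one power of `s - v`, leaving `C v^{-α} s (s-v)^α`, which vanishes as `v → s⁻`.
-/

open MeasureTheory Set intervalIntegral Filter Topology

/-- The kernel `g₅` from the regular-case Onsager–Machlup computation. -/
noncomputable def g₅ (α : ℝ) (h σ : ℝ → ℝ) (s v : ℝ) : ℝ :=
  ∫ r in (0:ℝ)..v, ∫ u in v..s, ∫ x in v..u,
    s ^ α * r ^ (-α) * h r * v ^ (-α) *
      (x - v) ^ (α - 1) * x ^ α * σ x * (s - r) ^ (-(α + 1))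

section ShiftedPower

variable {α v : ℝ}

lemma intervalIntegrable_sub_rpow_sub_one (hα : 0 < α) (u : ℝ) :
    IntervalIntegrable (fun x => (x - v) ^ (α - 1)) volume v u := by
  simpa using (intervalIntegrable_rpow' (a := 0) (b := u - v) (by linarith)).comp_sub_right v

lemma integral_sub_rpow_sub_one (hα : 0 < α) (u : ℝ) :
    ∫ x in v..u, (x - v) ^ (α - 1) = (u - v) ^ α / α := by
  rw [integral_comp_sub_right (· ^ (α - 1)), integral_rpow (Or.inl (by linarith)), sub_self,
    sub_add_cancel, Real.zero_rpow hα.ne', sub_zero]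

variable {C u : ℝ} {f : ℝ → ℝ}

lemma IntervalIntegrable.of_abs_le_sub_rpow (hα : 0 < α) (hvu : v ≤ u)
    (hf : AEStronglyMeasurable f (volume.restrict (Ioc v u)))
    (hfC : ∀ x ∈ Ioc v u, |f x| ≤ C * (x - v) ^ (α - 1)) :
    IntervalIntegrable f volume v u := by
  refine ((intervalIntegrable_sub_rpow_sub_one hα u).const_mul C).mono_fun'
    (by rwa [uIoc_of_le hvu]) ?_
  rw [uIoc_of_le hvu]
  exact (ae_restrict_mem measurableSet_Ioc).mono hfC

lemma abs_integral_le_of_abs_le_sub_rpow (hα : 0 < α) (hvu : v ≤ u)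
    (hfC : ∀ x ∈ Ioc v u, |f x| ≤ C * (x - v) ^ (α - 1)) :
    |∫ x in v..u, f x| ≤ C * (u - v) ^ α / α := by
  have := norm_integral_le_of_norm_le (f := f) hvu (ae_of_all _ hfC)
    ((intervalIntegrable_sub_rpow_sub_one hα u).const_mul C)
  rwa [intervalIntegral.integral_const_mul, integral_sub_rpow_sub_one hα, ← mul_div_assoc]
    at this

lemma abs_integral_integral_le_of_abs_le_sub_rpow (hα : 0 < α) (hC : 0 ≤ C) {s : ℝ}
    (hvs : v ≤ s)
    (hfC : ∀ x ∈ Ioc v s, |f x| ≤ C * (x - v) ^ (α - 1)) :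
    |∫ u in v..s, ∫ x in v..u, f x| ≤ C * (s - v) ^ α / α * (s - v) := by
  have := norm_integral_le_of_norm_le_const (a := v) (b := s) (f := fun u => ∫ x in v..u, f x)
    (C := C * (s - v) ^ α / α) fun u hu => by
      rw [uIoc_of_le hvs] at hu
      calc |∫ x in v..u, f x| ≤ C * (u - v) ^ α / α :=
            abs_integral_le_of_abs_le_sub_rpow hα hu.1.le fun x hx =>
              hfC x ⟨hx.1, hx.2.trans hu.2⟩
        _ ≤ C * (s - v) ^ α / α := by
            gcongr
            · linarith [hu.1]
            · linarith [hu.2]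
  rwa [abs_of_nonneg (sub_nonneg.2 hvs)] at this

end ShiftedPower

lemma rpow_neg_mul_rpow_neg_le {α a b : ℝ} (hα : 0 ≤ α) (ha : 0 < a) (hb : 0 < b) :
    a ^ (-α) * b ^ (-α) ≤ ((a + b) / 2) ^ (-α) * (a ^ (-α) + b ^ (-α)) := by
  wlog hab : a ≤ b generalizing a b
  · rw [add_comm a, add_comm (a ^ (-α)), mul_comm]
    exact this hb ha (le_of_not_ge hab)
  have hb' : b ^ (-α) ≤ ((a + b) / 2) ^ (-α) :=
    Real.rpow_le_rpow_of_nonpos (by positivity) (by linarith) (by linarith)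
  have := Real.rpow_nonneg ha.le (-α)
  have := Real.rpow_nonneg hb.le (-α)
  nlinarith

section SingularKernel

variable {α v s : ℝ}

lemma intervalIntegrable_sub_rpow_neg (hα : α < 1) (s a b : ℝ) :
    IntervalIntegrable (fun r => (s - r) ^ (-α)) volume a b := by
  simpa using (intervalIntegrable_rpow' (a := s - a) (b := s - b) (r := -α)
    (by linarith)).comp_sub_left s

lemma intervalIntegrable_rpow_neg_add_sub_rpow_neg (hα : α < 1) (s a b : ℝ) :
    IntervalIntegrable (fun r => r ^ (-α) + (s - r) ^ (-α)) volume a b :=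
  (intervalIntegrable_rpow' (by linarith)).add (intervalIntegrable_sub_rpow_neg hα s a b)

lemma integral_rpow_neg_add_sub_rpow_neg_le (hα : α < 1) (hv : 0 ≤ v) (hvs : v ≤ s) :
    ∫ r in (0:ℝ)..v, (r ^ (-α) + (s - r) ^ (-α)) ≤ 2 * s ^ (1 - α) / (1 - α) := by
  have hα' : -1 < -α := by linarith
  have h1α : 0 < 1 - α := by linarith
  have hsub :
      ∫ r in (0:ℝ)..v, (s - r) ^ (-α) = (s ^ (1 - α) - (s - v) ^ (1 - α)) / (1 - α) := by
    rw [integral_comp_sub_left (· ^ (-α)), integral_rpow (Or.inl hα'), sub_zero, neg_add_eq_sub]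
  rw [integral_add (intervalIntegrable_rpow' hα') (intervalIntegrable_sub_rpow_neg hα s 0 v),
    hsub, integral_rpow (Or.inl hα'), neg_add_eq_sub, Real.zero_rpow h1α.ne', sub_zero,
    ← add_div, two_mul]
  gcongr
  have := Real.rpow_nonneg (sub_nonneg.2 hvs) (1 - α)
  have := Real.rpow_le_rpow hv hvs h1α.le
  linarith

lemma rpow_neg_mul_sub_rpow_neg_le (hα : 0 ≤ α) {r : ℝ} (hr : 0 < r) (hrs : r < s) :
    r ^ (-α) * (s - r) ^ (-α) ≤ 2 ^ α * s ^ (-α) * (r ^ (-α) + (s - r) ^ (-α)) := by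
  have := rpow_neg_mul_rpow_neg_le hα hr (sub_pos.2 hrs)
  rwa [add_sub_cancel, Real.div_rpow (by linarith) zero_le_two, Real.rpow_neg zero_le_two,
    div_inv_eq_mul, mul_comm (s ^ (-α))] at this

lemma intervalIntegrable_rpow_neg_mul_sub_rpow_neg (hα0 : 0 ≤ α) (hα1 : α < 1) (hv : 0 ≤ v)
    (hvs : v < s) :
    IntervalIntegrable (fun r => r ^ (-α) * (s - r) ^ (-α)) volume 0 v := by
  refine ((intervalIntegrable_rpow_neg_add_sub_rpow_neg hα1 s 0 v).const_mul
    (2 ^ α * s ^ (-α))).mono_fun' (by fun_prop) ?_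
  rw [uIoc_of_le hv]
  refine (ae_restrict_mem measurableSet_Ioc).mono fun r hr => ?_
  have hrs : r < s := hr.2.trans_lt hvs
  dsimp only
  rw [Real.norm_of_nonneg (mul_nonneg (Real.rpow_nonneg hr.1.le _)
    (Real.rpow_nonneg (sub_nonneg.2 hrs.le) _))]
  exact rpow_neg_mul_sub_rpow_neg_le hα0 hr.1 hrs

lemma integral_rpow_neg_mul_sub_rpow_neg_le (hα0 : 0 ≤ α) (hα1 : α < 1) (hv : 0 ≤ v)
    (hvs : v < s) :
    ∫ r in (0:ℝ)..v, r ^ (-α) * (s - r) ^ (-α) ≤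
      2 ^ (α + 1) * s ^ (1 - 2 * α) / (1 - α) := by
  calc ∫ r in (0:ℝ)..v, r ^ (-α) * (s - r) ^ (-α)
      ≤ ∫ r in (0:ℝ)..v, 2 ^ α * s ^ (-α) * (r ^ (-α) + (s - r) ^ (-α)) :=
        integral_mono_on_of_le_Ioo hv
          (intervalIntegrable_rpow_neg_mul_sub_rpow_neg hα0 hα1 hv hvs)
          ((intervalIntegrable_rpow_neg_add_sub_rpow_neg hα1 s 0 v).const_mul _) fun r hr =>
          rpow_neg_mul_sub_rpow_neg_le hα0 hr.1 (hr.2.trans hvs)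
    _ ≤ 2 ^ α * s ^ (-α) * (2 * s ^ (1 - α) / (1 - α)) := by
        rw [intervalIntegral.integral_const_mul]
        exact mul_le_mul_of_nonneg_left (integral_rpow_neg_add_sub_rpow_neg_le hα1 hv hvs.le)
          (by have := hv.trans_lt hvs; positivity)
    _ = 2 ^ (α + 1) * s ^ (1 - 2 * α) / (1 - α) := by
        rw [Real.rpow_add_one two_ne_zero, show 1 - 2 * α = -α + (1 - α) by ring,
          Real.rpow_add (hv.trans_lt hvs)]
        ring

variable {L : ℝ} {g : ℝ → ℝ}

lemma abs_rpow_neg_mul_mul_sub_rpow_le {r c : ℝ} (hr : 0 < r) (hrv : r ≤ v) (hvs : v < s)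
    (hc : |c| ≤ L) :
    |r ^ (-α) * c * (s - r) ^ (-(α + 1))| ≤ L / (s - v) * (r ^ (-α) * (s - r) ^ (-α)) := by
  have hsr : 0 < s - r := by linarith
  have hsr_inv : (s - r)⁻¹ ≤ (s - v)⁻¹ := inv_anti₀ (by linarith) (by linarith)
  have hL : 0 ≤ L := (abs_nonneg c).trans hc
  rw [abs_mul, abs_mul, abs_of_nonneg (Real.rpow_nonneg hr.le _),
    abs_of_nonneg (Real.rpow_nonneg hsr.le _), neg_add, Real.rpow_add hsr, Real.rpow_neg_one,
    div_eq_mul_inv]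
  calc r ^ (-α) * |c| * ((s - r) ^ (-α) * (s - r)⁻¹)
      ≤ r ^ (-α) * L * ((s - r) ^ (-α) * (s - v)⁻¹) := by gcongr
    _ = L * (s - v)⁻¹ * (r ^ (-α) * (s - r) ^ (-α)) := by ring

lemma intervalIntegrable_rpow_neg_mul_mul_sub_rpow (hα0 : 0 ≤ α) (hα1 : α < 1) (hv : 0 ≤ v)
    (hvs : v < s) (hgL : ∀ r ∈ Ioc 0 v, |g r| ≤ L)
    (hg : AEStronglyMeasurable g (volume.restrict (Ioc 0 v))) :
    IntervalIntegrable (fun r => r ^ (-α) * g r * (s - r) ^ (-(α + 1))) volume 0 v := by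
  refine ((intervalIntegrable_rpow_neg_mul_sub_rpow_neg hα0 hα1 hv hvs).const_mul
    (L / (s - v))).mono_fun' (by
      rw [uIoc_of_le hv]
      exact ((Measurable.aestronglyMeasurable (by fun_prop)).mul hg).mul
        (Measurable.aestronglyMeasurable (by fun_prop))) ?_
  rw [uIoc_of_le hv]
  exact (ae_restrict_mem measurableSet_Ioc).mono fun r hr =>
    abs_rpow_neg_mul_mul_sub_rpow_le hr.1 hr.2 hvs (hgL r hr)

lemma abs_integral_rpow_neg_mul_mul_sub_rpow_le (hα0 : 0 ≤ α) (hα1 : α < 1) (hL : 0 ≤ L)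
    (hv : 0 ≤ v) (hvs : v < s) (hgL : ∀ r ∈ Ioc 0 v, |g r| ≤ L) :
    |∫ r in (0:ℝ)..v, r ^ (-α) * g r * (s - r) ^ (-(α + 1))| ≤
      L / (s - v) * (2 ^ (α + 1) * s ^ (1 - 2 * α) / (1 - α)) := by
  have := norm_integral_le_of_norm_le (f := fun r => r ^ (-α) * g r * (s - r) ^ (-(α + 1))) hv
    (ae_of_all _ fun r hr => abs_rpow_neg_mul_mul_sub_rpow_le hr.1 hr.2 hvs (hgL r hr))
    ((intervalIntegrable_rpow_neg_mul_sub_rpow_neg hα0 hα1 hv hvs).const_mul (L / (s - v)))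
  rw [intervalIntegral.integral_const_mul] at this
  exact this.trans (mul_le_mul_of_nonneg_left
    (integral_rpow_neg_mul_sub_rpow_neg_le hα0 hα1 hv hvs) (div_nonneg hL (by linarith)))

end SingularKernel

section G5

variable {α L M : ℝ} {h σ : ℝ → ℝ} {v s : ℝ}

noncomputable def g₅Integrand (α : ℝ) (h σ : ℝ → ℝ) (s v r x : ℝ) : ℝ :=
  s ^ α * r ^ (-α) * h r * v ^ (-α) * (x - v) ^ (α - 1) * x ^ α * σ x * (s - r) ^ (-(α + 1))

lemma g₅Integrand_eq_mul (r x : ℝ) :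
    g₅Integrand α h σ s v r x =
      s ^ α * v ^ (-α) * (r ^ (-α) * h r * (s - r) ^ (-(α + 1))) *
        ((x - v) ^ (α - 1) * x ^ α * σ x) := by
  unfold g₅Integrand
  ring

lemma integral_integral_g₅Integrand (r : ℝ) :
    ∫ u in v..s, ∫ x in v..u, g₅Integrand α h σ s v r x =
      s ^ α * v ^ (-α) * (r ^ (-α) * h r * (s - r) ^ (-(α + 1))) *
        ∫ u in v..s, ∫ x in v..u, (x - v) ^ (α - 1) * x ^ α * σ x := by
  simp only [g₅Integrand_eq_mul, intervalIntegral.integral_const_mul]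

lemma g₅_eq_mul :
    g₅ α h σ s v =
      s ^ α * v ^ (-α) * (∫ r in (0:ℝ)..v, r ^ (-α) * h r * (s - r) ^ (-(α + 1))) *
      ∫ u in v..s, ∫ x in v..u, (x - v) ^ (α - 1) * x ^ α * σ x := by
  change ∫ r in (0:ℝ)..v, ∫ u in v..s, ∫ x in v..u, g₅Integrand α h σ s v r x = _
  simp only [integral_integral_g₅Integrand, intervalIntegral.integral_mul_const,
    intervalIntegral.integral_const_mul]

lemma abs_sub_rpow_mul_rpow_mul_le (hα : 0 ≤ α) (hσM : ∀ x ∈ Icc (0:ℝ) 1, |σ x| ≤ M)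
    (hv : 0 ≤ v) (hs1 : s ≤ 1) {x : ℝ} (hx : x ∈ Ioc v s) :
    |(x - v) ^ (α - 1) * x ^ α * σ x| ≤ M * s ^ α * (x - v) ^ (α - 1) := by
  have hx0 : 0 ≤ x := hv.trans hx.1.le
  rw [abs_mul, abs_mul, abs_of_nonneg (Real.rpow_nonneg (by linarith [hx.1]) _),
    abs_of_nonneg (Real.rpow_nonneg hx0 _), mul_assoc, mul_comm M, mul_comm _ ((x - v) ^ _)]
  have := Real.rpow_nonneg (sub_nonneg.2 hx.1.le) (α - 1)
  have := Real.rpow_nonneg (hx0.trans hx.2) α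
  gcongr
  · exact hx.2
  · exact hσM x ⟨hx0, hx.2.trans hs1⟩

lemma abs_mul_mul_le_g₅_bound {A B : ℝ} (hα0 : 0 < α) (hα1 : α < 1) (hL : 0 ≤ L)
    (hv : 0 < v) (hvs : v < s)
    (hB : |B| ≤ L / (s - v) * (2 ^ (α + 1) * s ^ (1 - 2 * α) / (1 - α)))
    (hA : |A| ≤ M * s ^ α * (s - v) ^ α / α * (s - v)) :
    |s ^ α * v ^ (-α) * B * A| ≤
      2 ^ (α + 1) * L * M / (α * (1 - α)) * v ^ (-α) * s * (s - v) ^ α := by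
  have hs : 0 < s := hv.trans hvs
  have hsv : 0 < s - v := sub_pos.2 hvs
  have hs_pow : s ^ α * s ^ (1 - 2 * α) * s ^ α = s := by
    rw [← Real.rpow_add hs, ← Real.rpow_add hs, show α + (1 - 2 * α) + α = 1 by ring,
      Real.rpow_one]
  calc |s ^ α * v ^ (-α) * B * A|
      ≤ s ^ α * v ^ (-α) * (L / (s - v) * (2 ^ (α + 1) * s ^ (1 - 2 * α) / (1 - α))) *
          (M * s ^ α * (s - v) ^ α / α * (s - v)) := by
        rw [abs_mul, abs_mul, abs_of_nonneg (by positivity)]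
        gcongr
    _ = 2 ^ (α + 1) * L * M / (α * (1 - α)) * v ^ (-α) * (s ^ α * s ^ (1 - 2 * α) * s ^ α) *
          (s - v) ^ α := by
        field_simp
    _ = _ := by rw [hs_pow]

theorem g₅_integrable_and_abs_le (hα0 : 0 < α) (hα1 : α < 1) (hL : 0 ≤ L) (hM : 0 ≤ M)
    (hh : Measurable h) (hσ : Measurable σ) (hhL : ∀ x ∈ Icc (0:ℝ) 1, |h x| ≤ L)
    (hσM : ∀ x ∈ Icc (0:ℝ) 1, |σ x| ≤ M) (hv : 0 < v) (hvs : v < s) (hs1 : s ≤ 1) :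
    (∀ r ∈ Ioo (0:ℝ) v, ∀ u ∈ Ioo v s,
      IntervalIntegrable (g₅Integrand α h σ s v r) volume v u) ∧
    (∀ r ∈ Ioo (0:ℝ) v,
      IntervalIntegrable (fun u => ∫ x in v..u, g₅Integrand α h σ s v r x) volume v s) ∧
    IntervalIntegrable (fun r => ∫ u in v..s, ∫ x in v..u, g₅Integrand α h σ s v r x)
      volume 0 v ∧
    |g₅ α h σ s v| ≤
      2 ^ (α + 1) * L * M / (α * (1 - α)) * v ^ (-α) * s * (s - v) ^ α := by
  have hφ_le (x : ℝ) (hx : x ∈ Ioc v s) :=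
    abs_sub_rpow_mul_rpow_mul_le hα0.le hσM hv.le hs1 hx
  have hφ (u : ℝ) (hu : u ∈ Icc v s) :
      IntervalIntegrable (fun x => (x - v) ^ (α - 1) * x ^ α * σ x) volume v u :=
    .of_abs_le_sub_rpow hα0 hu.1 (Measurable.aestronglyMeasurable (by fun_prop))
      fun x hx => hφ_le x ⟨hx.1, hx.2.trans hu.2⟩
  have hhL' (r : ℝ) (hr : r ∈ Ioc 0 v) : |h r| ≤ L := hhL r ⟨hr.1.le, by linarith [hr.2]⟩
  refine ⟨fun r _ u hu => ?_, fun r _ => ?_, ?_, ?_⟩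
  · change IntervalIntegrable (fun x => g₅Integrand α h σ s v r x) volume v u
    simp only [g₅Integrand_eq_mul]
    exact (hφ u ⟨hu.1.le, hu.2.le⟩).const_mul _
  · simp only [g₅Integrand_eq_mul, intervalIntegral.integral_const_mul]
    exact (continuousOn_primitive_interval' (hφ s ⟨hvs.le, le_rfl⟩)
      left_mem_uIcc).intervalIntegrable.const_mul _
  · simp only [integral_integral_g₅Integrand]
    exact ((intervalIntegrable_rpow_neg_mul_mul_sub_rpow hα0.le hα1 hv.le hvs hhL'
      hh.aestronglyMeasurable).const_mul _).mul_const _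
  · rw [g₅_eq_mul]
    exact abs_mul_mul_le_g₅_bound hα0 hα1 hL hv hvs
      (abs_integral_rpow_neg_mul_mul_sub_rpow_le hα0.le hα1 hL hv.le hvs hhL')
      (abs_integral_integral_le_of_abs_le_sub_rpow hα0
        (mul_nonneg hM (Real.rpow_nonneg (hv.trans hvs).le _)) hvs.le hφ_le)

end G5

lemma tendsto_mul_rpow_neg_mul_mul_sub_rpow_nhdsLT {α s : ℝ} (hα : 0 < α) (hs : 0 < s)
    (C : ℝ) :
    Tendsto (fun v => C * v ^ (-α) * s * (s - v) ^ α) (𝓝[<] s) (𝓝 0) := by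
  have hcont : ContinuousAt (fun v => C * v ^ (-α) * s * (s - v) ^ α) s := by
    fun_prop (disch := first | exact Or.inl hs.ne' | exact Or.inr hα.le)
  simpa [Real.zero_rpow hα.ne'] using hcont.tendsto.mono_left nhdsWithin_le_nhds

/-- For `α ∈ (0,1/2)`, `|h| ≤ L`, `|σ| ≤ M`, the iterated integral defining
`g₅` converges absolutely and there is a constant `C = C(α, L, M)` with
`|g₅(s,v)| ≤ C v^{-α} s (s-v)^α` for `0 < v < s ≤ 1`; in particular `g₅`
vanishes on the diagonal. -/
theorem g₅_bound
    (α L M : ℝ) (hα0 : 0 < α) (hα1 : α < 1 / 2) (hL : 0 < L) (hM : 0 < M) :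
    ∃ C : ℝ, 0 < C ∧
      ∀ h σ : ℝ → ℝ, Measurable h → Measurable σ →
        (∀ x ∈ Icc (0:ℝ) 1, |h x| ≤ L) → (∀ x ∈ Icc (0:ℝ) 1, |σ x| ≤ M) →
        (∀ v s : ℝ, 0 < v → v < s → s ≤ 1 →
          (∀ r ∈ Ioo (0:ℝ) v, ∀ u ∈ Ioo v s,
            IntervalIntegrable
              (fun x => s ^ α * r ^ (-α) * h r * v ^ (-α) *
                (x - v) ^ (α - 1) * x ^ α * σ x * (s - r) ^ (-(α + 1)))
              volume v u) ∧
          (∀ r ∈ Ioo (0:ℝ) v,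
            IntervalIntegrable
              (fun u => ∫ x in v..u, s ^ α * r ^ (-α) * h r * v ^ (-α) *
                (x - v) ^ (α - 1) * x ^ α * σ x * (s - r) ^ (-(α + 1)))
              volume v s) ∧
          IntervalIntegrable
            (fun r => ∫ u in v..s, ∫ x in v..u,
              s ^ α * r ^ (-α) * h r * v ^ (-α) *
                (x - v) ^ (α - 1) * x ^ α * σ x * (s - r) ^ (-(α + 1)))
            volume 0 v ∧
          |g₅ α h σ s v| ≤ C * v ^ (-α) * s * (s - v) ^ α) ∧
        ∀ s ∈ Ioc (0:ℝ) 1,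
          Tendsto (fun v => g₅ α h σ s v) (nhdsWithin s (Iio s)) (nhds 0) := by
  have hα1' : α < 1 := by linarith
  have h1α : 0 < 1 - α := by linarith
  refine ⟨2 ^ (α + 1) * L * M / (α * (1 - α)), by positivity, fun h σ hh hσ hhL hσM => ?_⟩
  have hbound (v s : ℝ) (hv : 0 < v) (hvs : v < s) (hs1 : s ≤ 1) :=
    g₅_integrable_and_abs_le hα0 hα1' hL.le hM.le hh hσ hhL hσM hv hvs hs1
  refine ⟨hbound, fun s ⟨hs0, hs1⟩ => ?_⟩
  exact squeeze_zero_norm'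
    (mem_of_superset (Ioo_mem_nhdsLT hs0) fun v hv => (hbound v s hv.1 hv.2 hs1).2.2.2)
    (tendsto_mul_rpow_neg_mul_mul_sub_rpow_nhdsLT hα0 hs0 _)
end

section
/- Let γ ∈ ℝ, let V : ℝ → ℝ be continuously differentiable, and let ψ : [0,1] → ℝ be twice continuously differentiable. Then ∫_0^1 ( ψ''(s) + γ ψ'(s) + V'(ψ(s)) )² ds = ∫_0^1 ( ψ''(s) + V'(ψ(s)) )² + γ² ψ'(s)² ds + γ ( ψ'(1)² − ψ'(0)² + 2 V(ψ(1)) − 2 V(ψ(0)) ). In particular, if ψ'(0) = ψ'(1) = 0 and V(ψ(0)) = V(ψ(1)), then ∫_0^1 ( ψ'' + γ ψ' + V'(ψ) )² ds = ∫_0^1 ( ψ'' + V'(ψ) )² + γ² (ψ')² ds. -/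
open MeasureTheory intervalIntegral

/-!
Expanding the square, the damping contributes `γ² ψ'²` plus the cross term
`γ · 2ψ' (ψ'' + V'(ψ))`, and the latter is `γ` times the derivative of the energy
`ψ'² + 2 V(ψ)`. The fundamental theorem of calculus turns it into a boundary term.
-/

/-- Twice the mechanical energy of the path `ψ` in the potential `V`. -/
noncomputable def energy (V ψ : ℝ → ℝ) (t : ℝ) : ℝ :=
  deriv ψ t ^ 2 + 2 * V (ψ t)

section

variable {V ψ : ℝ → ℝ}

theorem hasDerivAt_energy {t : ℝ} (hV : DifferentiableAt ℝ V (ψ t))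
    (hψ : DifferentiableAt ℝ ψ t) (hψ' : DifferentiableAt ℝ (deriv ψ) t) :
    HasDerivAt (energy V ψ) (2 * deriv ψ t * (deriv (deriv ψ) t + deriv V (ψ t))) t := by
  have hkinetic := hψ'.hasDerivAt.pow 2
  have hpotential := (hV.hasDerivAt.comp t hψ.hasDerivAt).const_mul 2
  exact (hkinetic.add hpotential).congr_deriv (by ring)

variable (hV : ContDiff ℝ 1 V) (hψ : ContDiff ℝ 2 ψ)
include hV hψ

theorem continuous_deriv_deriv_add_deriv_comp :
    Continuous fun s => deriv (deriv ψ) s + deriv V (ψ s) :=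
  (hψ.deriv'.continuous_deriv le_rfl).add ((hV.continuous_deriv le_rfl).comp hψ.continuous)

theorem integral_deriv_energy (a b : ℝ) :
    ∫ s in a..b, 2 * deriv ψ s * (deriv (deriv ψ) s + deriv V (ψ s))
      = energy V ψ b - energy V ψ a := by
  refine integral_eq_sub_of_hasDerivAt (fun t _ => ?_) ?_
  · exact hasDerivAt_energy (hV.differentiable one_ne_zero _)
      (hψ.differentiable two_ne_zero _) (hψ.deriv'.differentiable one_ne_zero _)
  · exact ((continuous_const.mul (hψ.continuous_deriv one_le_two)).mul
      (continuous_deriv_deriv_add_deriv_comp hV hψ)).intervalIntegrable a b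

theorem integral_damped_sq (γ a b : ℝ) :
    ∫ s in a..b, (deriv (deriv ψ) s + γ * deriv ψ s + deriv V (ψ s)) ^ 2
      = (∫ s in a..b, ((deriv (deriv ψ) s + deriv V (ψ s)) ^ 2 + γ ^ 2 * deriv ψ s ^ 2))
        + γ * (energy V ψ b - energy V ψ a) := by
  have hψ' := hψ.continuous_deriv one_le_two
  have hforce := continuous_deriv_deriv_add_deriv_comp hV hψ
  rw [← integral_deriv_energy hV hψ, ← intervalIntegral.integral_const_mul,
    ← intervalIntegral.integral_add]
  · exact integral_congr fun s _ => by ring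
  · exact ((hforce.pow 2).add (continuous_const.mul (hψ'.pow 2))).intervalIntegrable a b
  · exact (continuous_const.mul ((continuous_const.mul hψ').mul hforce)).intervalIntegrable a b

end

/-- Energy identity for the Onsager–Machlup density of the damped
Duffing-type equation: the cross term coming from the damping `γ` reduces to
a boundary term, and vanishes when `ψ'(0) = ψ'(1) = 0` and
`V(ψ(0)) = V(ψ(1))`. -/
theorem duffing_energy_identity
    (γ : ℝ) (V ψ : ℝ → ℝ) (hV : ContDiff ℝ 1 V) (hψ : ContDiff ℝ 2 ψ) :
    (∫ s in (0:ℝ)..1,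
        (deriv (deriv ψ) s + γ * deriv ψ s + deriv V (ψ s)) ^ 2)
      = (∫ s in (0:ℝ)..1,
          ((deriv (deriv ψ) s + deriv V (ψ s)) ^ 2 + γ ^ 2 * (deriv ψ s) ^ 2))
        + γ * ((deriv ψ 1) ^ 2 - (deriv ψ 0) ^ 2 + 2 * V (ψ 1) - 2 * V (ψ 0)) ∧
    (deriv ψ 0 = 0 → deriv ψ 1 = 0 → V (ψ 0) = V (ψ 1) →
      (∫ s in (0:ℝ)..1,
          (deriv (deriv ψ) s + γ * deriv ψ s + deriv V (ψ s)) ^ 2)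
        = ∫ s in (0:ℝ)..1,
            ((deriv (deriv ψ) s + deriv V (ψ s)) ^ 2
              + γ ^ 2 * (deriv ψ s) ^ 2)) := by
  have hidentity := integral_damped_sq hV hψ γ 0 1
  simp only [energy] at hidentity
  refine ⟨by rw [hidentity]; ring, fun h0 h1 hV01 => ?_⟩
  rw [hidentity, h0, h1, hV01]
  ring
end

section
/- Let k = (1/2) ( √π Γ(1/4) / Γ(3/4) )², where Γ denotes the Gamma function. If X : [0,1] → ℝ is twice differentiable and satisfies the pendulum equation X''(t) = −k sin(X(t)) for all t ∈ [0,1], with initial conditions X(0) = −π/2 and X'(0) = 0, then X(1) = π/2 and X'(1) = 0. -/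
/-!
Energy conservation turns the equation into `X'² = 2k cos X`, which keeps `X` in
`[-π/2, π/2]`; as long as `X' > 0`, separation of variables gives
`t = ∫_{-π/2}^{X t} du / √(2k cos u)`. The substitution `t = sin² x` identifies
`∫_{-π/2}^{π/2} du / √(cos u)` with the beta integral `B(1/2, 1/4) = √π Γ(1/4) / Γ(3/4)`,
which is exactly `√(2k)`. Hence the first zero of `X'` after time `0` is at time `1`,
where `X = π/2`.
-/

open Set Real

open MeasureTheory intervalIntegral Filter Topology ProbabilityTheory

theorem integral_rpow_mul_one_sub_rpow {a b : ℝ} (ha : 0 < a) (hb : 0 < b) :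
    ∫ x in (0 : ℝ)..1, x ^ (a - 1) * (1 - x) ^ (b - 1) = beta a b := by
  have hofReal : EqOn (fun x : ℝ ↦ (x : ℂ) ^ ((a : ℂ) - 1) * (1 - (x : ℂ)) ^ ((b : ℂ) - 1))
      (fun x ↦ ((x ^ (a - 1) * (1 - x) ^ (b - 1) : ℝ) : ℂ)) (uIcc 0 1) := by
    intro x hx
    rw [uIcc_of_le zero_le_one] at hx
    push_cast
    rw [Complex.ofReal_cpow hx.1, Complex.ofReal_cpow (sub_nonneg.2 hx.2)]
    push_cast
    ring
  rw [beta_eq_betaIntegralReal a b ha hb, Complex.betaIntegral, integral_congr hofReal,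
    intervalIntegral.integral_ofReal, Complex.ofReal_re]

theorem sq_rpow_sub_one_mul_self {s : ℝ} (hs : 0 < s) (a : ℝ) :
    (s ^ 2) ^ (a - 1) * s = s ^ (2 * a - 1) := by
  rw [← rpow_natCast, ← rpow_mul hs.le, ← rpow_add_one hs.ne']
  congr 1
  push_cast
  ring

theorem integral_sin_rpow_mul_cos_rpow {a b : ℝ} (ha : 0 < a) (hb : 0 < b) :
    ∫ x in (0 : ℝ)..π / 2, sin x ^ (2 * a - 1) * cos x ^ (2 * b - 1) = beta a b / 2 := by
  have hπ : (0 : ℝ) ≤ π / 2 := by positivity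
  have hsubst := integral_comp_mul_deriv_of_deriv_nonneg (a := 0) (b := π / 2)
    (f := fun x ↦ sin x ^ 2) (f' := fun x ↦ 2 * sin x * cos x)
    (g := fun t ↦ t ^ (a - 1) * (1 - t) ^ (b - 1)) (by fun_prop)
    (fun x _ ↦ by simpa using (hasDerivAt_sin x).fun_pow 2)
    (fun x hx ↦ by
      rw [min_eq_left hπ, max_eq_right hπ] at hx
      have := sin_nonneg_of_nonneg_of_le_pi hx.1.le (by linarith [hx.2, pi_pos])
      have := cos_nonneg_of_mem_Icc ⟨by linarith [hx.1, pi_pos], hx.2.le⟩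
      positivity)
  simp only [sin_zero, sin_pi_div_two, zero_pow two_ne_zero, one_pow, Function.comp_def]
    at hsubst
  rw [← integral_rpow_mul_one_sub_rpow ha hb, ← hsubst, eq_div_iff two_ne_zero,
    ← intervalIntegral.integral_mul_const]
  refine integral_congr_Ioo_of_le hπ fun x hx ↦ ?_
  have hs : 0 < sin x := sin_pos_of_pos_of_lt_pi hx.1 (by linarith [hx.2, pi_pos])
  have hc : 0 < cos x := cos_pos_of_mem_Ioo ⟨by linarith [hx.1, pi_pos], hx.2⟩
  rw [← cos_sq', ← sq_rpow_sub_one_mul_self hs, ← sq_rpow_sub_one_mul_self hc]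
  ring

theorem integral_cos_rpow {b : ℝ} (hb : 0 < b) :
    ∫ x in -(π / 2)..π / 2, cos x ^ (2 * b - 1) = beta (1 / 2) b := by
  have hright : ∫ x in (0 : ℝ)..π / 2, cos x ^ (2 * b - 1) = beta (1 / 2) b / 2 := by
    simpa using integral_sin_rpow_mul_cos_rpow one_half_pos hb
  have hleft : ∫ x in -(π / 2)..0, cos x ^ (2 * b - 1) = beta (1 / 2) b / 2 := by
    rw [← hright]
    simpa using (integral_comp_neg (a := 0) (b := π / 2) fun x ↦ cos x ^ (2 * b - 1)).symm
  have hne : beta (1 / 2) b / 2 ≠ 0 := (div_pos (beta_pos one_half_pos hb) two_pos).ne'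
  rw [← integral_add_adjacent_intervals (b := 0)
    (intervalIntegrable_of_integral_ne_zero (hleft ▸ hne))
    (intervalIntegrable_of_integral_ne_zero (hright ▸ hne)), hleft, hright]
  ring

theorem integral_inv_sqrt_cos :
    ∫ x in -(π / 2)..π / 2, (√(cos x))⁻¹ = √π * Gamma (1 / 4) / Gamma (3 / 4) := by
  have h := integral_cos_rpow (b := 1 / 4) (by norm_num)
  rw [beta, Gamma_one_half_eq, show (1 / 2 : ℝ) + 1 / 4 = 3 / 4 by norm_num,
    show 2 * (1 / 4 : ℝ) - 1 = -(1 / 2) by norm_num] at h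
  rw [← h]
  refine integral_congr fun x hx ↦ ?_
  rw [uIcc_of_le (by linarith [pi_pos])] at hx
  rw [sqrt_eq_rpow, ← rpow_neg (cos_nonneg_of_mem_Icc hx)]

noncomputable def pendulumTime (k x : ℝ) : ℝ :=
  ∫ u in -(π / 2)..x, (√(2 * k * cos u))⁻¹

theorem pendulumTime_pi_div_two {k : ℝ} (hk : 0 ≤ k) :
    pendulumTime k (π / 2) = (√(2 * k))⁻¹ * (√π * Gamma (1 / 4) / Gamma (3 / 4)) := by
  simp_rw [pendulumTime, ← integral_inv_sqrt_cos, ← intervalIntegral.integral_const_mul,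
    sqrt_mul (by positivity : 0 ≤ 2 * k), mul_inv]

theorem pendulumTime_pi_div_two_pos {k : ℝ} (hk : 0 < k) : 0 < pendulumTime k (π / 2) := by
  have := Gamma_pos_of_pos (by norm_num : (0 : ℝ) < 1 / 4)
  have := Gamma_pos_of_pos (by norm_num : (0 : ℝ) < 3 / 4)
  rw [pendulumTime_pi_div_two hk.le]
  positivity

theorem pendulumTime_lt_pi_div_two {k x : ℝ} (hk : 0 < k) (hx : x ∈ Ico (-(π / 2)) (π / 2)) :
    pendulumTime k x < pendulumTime k (π / 2) := by
  have hint : IntervalIntegrable (fun u ↦ (√(2 * k * cos u))⁻¹) volume (-(π / 2)) (π / 2) :=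
    intervalIntegrable_of_integral_ne_zero (pendulumTime_pi_div_two_pos hk).ne'
  have hx' : x ∈ uIcc (-(π / 2)) (π / 2) := by
    rw [uIcc_of_le (by linarith [hx.1, hx.2])]; exact Ico_subset_Icc_self hx
  have hpos : 0 < ∫ u in x..π / 2, (√(2 * k * cos u))⁻¹ := by
    refine intervalIntegral_pos_of_pos_on (hint.mono_set (uIcc_subset_uIcc hx' right_mem_uIcc))
      (fun u hu ↦ ?_) hx.2
    have := cos_pos_of_mem_Ioo ⟨hx.1.trans_lt hu.1, hu.2⟩
    positivity
  rw [pendulumTime, pendulumTime, ← integral_add_adjacent_intervals (b := x)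
    (hint.mono_set (uIcc_subset_uIcc left_mem_uIcc hx'))
    (hint.mono_set (uIcc_subset_uIcc hx' right_mem_uIcc))]
  linarith

theorem integral_inv_comp_eq_sub {g X X' : ℝ → ℝ} {a b : ℝ} (hab : a ≤ b)
    (hX : ContinuousOn X (Icc a b)) (hX' : ∀ t ∈ Ioo a b, HasDerivAt X (X' t) t)
    (hpos : ∀ t ∈ Ioo a b, 0 < X' t) (hg : ∀ t ∈ Ioo a b, X' t = g (X t)) :
    ∫ u in X a..X b, (g u)⁻¹ = b - a := by
  have hsubst := integral_comp_mul_deriv_of_deriv_nonneg (g := fun u ↦ (g u)⁻¹)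
    (by rwa [uIcc_of_le hab]) (by simpa only [min_eq_left hab, max_eq_right hab] using hX')
    (by simpa only [min_eq_left hab, max_eq_right hab] using fun t ht ↦ (hpos t ht).le)
  rw [← hsubst]
  calc ∫ t in a..b, ((fun u ↦ (g u)⁻¹) ∘ X) t * X' t = ∫ _ in a..b, (1 : ℝ) :=
        integral_congr_Ioo_of_le hab fun t ht ↦ by
          simp only [Function.comp_apply, ← hg t ht, inv_mul_cancel₀ (hpos t ht).ne']
    _ = b - a := by simp

theorem pendulum_energy_eq {k a b : ℝ} {X X' : ℝ → ℝ}
    (hX : ∀ t ∈ Icc a b, HasDerivWithinAt X (X' t) (Icc a b) t)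
    (hX' : ∀ t ∈ Icc a b, HasDerivWithinAt X' (-k * sin (X t)) (Icc a b) t) :
    ∀ t ∈ Icc a b, X' t ^ 2 - 2 * k * cos (X t) = X' a ^ 2 - 2 * k * cos (X a) := by
  have hE : ∀ t ∈ Icc a b,
      HasDerivWithinAt (fun s ↦ X' s ^ 2 - 2 * k * cos (X s)) 0 (Icc a b) t := by
    intro t ht
    refine (((hX' t ht).fun_pow 2).fun_sub (((hX t ht).cos).const_mul (2 * k))).congr_deriv ?_
    push_cast
    ring
  exact constant_of_has_deriv_right_zero (fun t ht ↦ (hE t ht).continuousWithinAt)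
    fun t ht ↦ (hE t (Ico_subset_Icc_self ht)).mono_of_mem_nhdsWithin (Icc_mem_nhdsGE_of_mem ht)

theorem IsPreconnected.subset_Icc_of_cos_nonneg {S : Set ℝ} (hS : IsPreconnected S)
    (hcos : ∀ x ∈ S, 0 ≤ cos x) (hS₀ : (S ∩ Icc (-(π / 2)) (π / 2)).Nonempty) :
    S ⊆ Icc (-(π / 2)) (π / 2) := by
  obtain ⟨x₀, hx₀S, hx₀⟩ := hS₀
  intro x hx
  refine ⟨not_lt.1 fun h ↦ ?_, not_lt.1 fun h ↦ ?_⟩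
  · have hmem : max x (-π) ∈ S := hS.Icc_subset hx hx₀S
      ⟨le_max_left _ _, max_le (by linarith [hx₀.1]) (by linarith [hx₀.1, pi_pos])⟩
    have hlt := max_lt h (by linarith [pi_pos] : -π < -(π / 2))
    have := cos_neg_of_pi_div_two_lt_of_lt (x := -max x (-π)) (by linarith)
      (by linarith [le_max_right x (-π), pi_pos])
    rw [cos_neg] at this
    linarith [hcos _ hmem]
  · have hmem : min x π ∈ S := hS.Icc_subset hx₀S hx
      ⟨le_min (by linarith [hx₀.2]) (by linarith [hx₀.2, pi_pos]), min_le_left _ _⟩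
    have hlt := lt_min h (by linarith [pi_pos] : π / 2 < π)
    have := cos_neg_of_pi_div_two_lt_of_lt hlt (by linarith [min_le_right x π, pi_pos])
    linarith [hcos _ hmem]

theorem cos_eq_zero_iff_of_mem_Icc {x : ℝ} (hx : x ∈ Icc (-(π / 2)) (π / 2)) :
    cos x = 0 ↔ x = -(π / 2) ∨ x = π / 2 := by
  refine ⟨fun h ↦ ?_, by rintro (rfl | rfl) <;> simp⟩
  by_contra! hne
  exact (cos_pos_of_mem_Ioo ⟨lt_of_le_of_ne hx.1 hne.1.symm, lt_of_le_of_ne hx.2 hne.2⟩).ne' h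

theorem HasDerivWithinAt.eventually_nhdsGT_lt {f : ℝ → ℝ} {f' a : ℝ}
    (hf : HasDerivWithinAt f f' (Ici a) a) (hf' : 0 < f') : ∀ᶠ t in 𝓝[>] a, f a < f t := by
  have hslope := (hasDerivWithinAt_iff_tendsto_slope' (lt_irrefl a)).1 hf.Ioi_of_Ici
  filter_upwards [hslope.eventually (eventually_gt_nhds hf'), self_mem_nhdsWithin] with t ht hta
  rw [slope_def_field] at ht
  have := (div_pos_iff_of_pos_right (sub_pos.2 (mem_Ioi.1 hta))).1 ht
  linarith

theorem ContinuousOn.exists_first_zero {f : ℝ → ℝ} {a b : ℝ} (hab : a < b)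
    (hf : ContinuousOn f (Icc a b)) (hpos : ∀ᶠ t in 𝓝[>] a, 0 < f t) :
    ∃ c ∈ Ioc a b, (∀ t ∈ Ioo a c, 0 < f t) ∧ (c = b ∨ f c = 0) := by
  obtain ⟨u, hu, hIoo⟩ := (mem_nhdsGT_iff_exists_mem_Ioc_Ioo_subset hab).1 hpos
  set S := Icc u b ∩ f ⁻¹' Iic 0
  have hpos_of_notMem : ∀ t ∈ Ioo a b, t ∉ S → 0 < f t := fun t ht htS ↦
    if htu : t < u then hIoo ⟨ht.1, htu⟩ else not_le.1 fun h ↦ htS ⟨⟨not_lt.1 htu, ht.2.le⟩, h⟩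
  rcases S.eq_empty_or_nonempty with hS | hS
  · exact ⟨b, ⟨hab, le_rfl⟩, fun t ht ↦ hpos_of_notMem t ht (hS ▸ notMem_empty t), Or.inl rfl⟩
  have hSc : IsCompact S := isCompact_Icc.of_isClosed_subset
    ((hf.mono (Icc_subset_Icc_left hu.1.le)).preimage_isClosed_of_isClosed isClosed_Icc
      isClosed_Iic) inter_subset_left
  obtain ⟨⟨huc, hcb⟩, hfc⟩ := hSc.sInf_mem hS
  set c := sInf S
  have hac : a < c := hu.1.trans_le huc
  have hbefore : ∀ t ∈ Ioo a c, 0 < f t := fun t ht ↦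
    hpos_of_notMem t ⟨ht.1, ht.2.trans_le hcb⟩ fun htS ↦ (csInf_le hSc.bddBelow htS).not_gt ht.2
  refine ⟨c, ⟨hac, hcb⟩, hbefore, Or.inr (le_antisymm hfc ?_)⟩
  have hlim : Tendsto f (𝓝[Ioo a c] c) (𝓝 (f c)) :=
    (hf c ⟨hac.le, hcb⟩).mono (Ioo_subset_Icc_self.trans (Icc_subset_Icc_right hcb))
  have : (𝓝[Ioo a c] c).NeBot := by rw [nhdsWithin_Ioo_eq_nhdsLT hac]; infer_instance
  exact ge_of_tendsto hlim (eventually_nhdsWithin_of_forall fun t ht ↦ (hbefore t ht).le)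

theorem pendulum_reaches_pi_div_two {k T : ℝ} {X X' : ℝ → ℝ} (hk : 0 < k)
    (hT : pendulumTime k (π / 2) = T)
    (hX : ∀ t ∈ Icc 0 T, HasDerivWithinAt X (X' t) (Icc 0 T) t)
    (hX' : ∀ t ∈ Icc 0 T, HasDerivWithinAt X' (-k * sin (X t)) (Icc 0 T) t)
    (h0 : X 0 = -(π / 2)) (h0' : X' 0 = 0) :
    X T = π / 2 ∧ X' T = 0 := by
  have hT₀ : 0 < T := hT ▸ pendulumTime_pi_div_two_pos hk
  have hXc : ContinuousOn X (Icc 0 T) := fun t ht ↦ (hX t ht).continuousWithinAt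
  have henergy : ∀ t ∈ Icc 0 T, X' t ^ 2 = 2 * k * cos (X t) := fun t ht ↦ by
    have := pendulum_energy_eq hX hX' t ht
    rw [h0, h0', cos_neg, cos_pi_div_two] at this
    linarith
  have hrange : ∀ t ∈ Icc 0 T, X t ∈ Icc (-(π / 2)) (π / 2) := fun t ht ↦
    (isPreconnected_Icc.image X hXc).subset_Icc_of_cos_nonneg
      (forall_mem_image.2 fun s hs ↦ by nlinarith [henergy s hs, sq_nonneg (X' s)])
      ⟨X 0, mem_image_of_mem X (left_mem_Icc.2 hT₀.le), h0 ▸ ⟨le_rfl, by linarith [pi_pos]⟩⟩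
      (mem_image_of_mem X ht)
  have hstart : ∀ᶠ t in 𝓝[>] 0, 0 < X' t := by
    have hX'₀ := (hX' 0 (left_mem_Icc.2 hT₀.le)).mono_of_mem_nhdsWithin (Icc_mem_nhdsGE hT₀)
    rw [h0, sin_neg, sin_pi_div_two, neg_mul_neg, mul_one] at hX'₀
    simpa only [h0'] using hX'₀.eventually_nhdsGT_lt hk
  obtain ⟨c, hc, hpos, hcT⟩ := ContinuousOn.exists_first_zero hT₀
    (fun t ht ↦ (hX' t ht).continuousWithinAt) hstart
  have hcIcc : c ∈ Icc 0 T := Ioc_subset_Icc_self hc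
  have htime : pendulumTime k (X c) = c := by
    have hIoo : ∀ t ∈ Ioo 0 c, t ∈ Icc 0 T := fun t ht ↦ ⟨ht.1.le, ht.2.le.trans hc.2⟩
    have := integral_inv_comp_eq_sub hc.1.le (hXc.mono (Icc_subset_Icc_right hc.2))
      (fun t ht ↦ (hX t (hIoo t ht)).hasDerivAt (Icc_mem_nhds ht.1 (ht.2.trans_le hc.2))) hpos
      (g := fun u ↦ √(2 * k * cos u))
      (fun t ht ↦ by rw [← henergy t (hIoo t ht), sqrt_sq (hpos t ht).le])
    rwa [h0, sub_zero] at this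
  have hXc_top : X c = π / 2 := by
    rcases hcT with rfl | hc0
    · by_contra hne
      exact (pendulumTime_lt_pi_div_two hk ⟨(hrange c hcIcc).1,
        lt_of_le_of_ne (hrange c hcIcc).2 hne⟩).ne (htime.trans hT.symm)
    have hcos : cos (X c) = 0 := by
      have := henergy c hcIcc
      rw [hc0] at this
      nlinarith
    refine ((cos_eq_zero_iff_of_mem_Icc (hrange c hcIcc)).1 hcos).resolve_left fun hbot ↦ ?_
    rw [hbot, pendulumTime, integral_same] at htime
    exact hc.1.ne htime
  obtain rfl : c = T := by rw [← htime, hXc_top, hT]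
  refine ⟨hXc_top, pow_eq_zero_iff two_ne_zero |>.1 ?_⟩
  rw [henergy c hcIcc, hXc_top, cos_pi_div_two, mul_zero]

/-- The pendulum released from rest at angle `-π/2` under
`X'' = -k sin X`, with the period-normalizing constant
`k = (1/2)(√π Γ(1/4)/Γ(3/4))²`, reaches the angle `π/2` with zero velocity
at time `1`. -/
theorem pendulum_half_period
    (X X' : ℝ → ℝ)
    (hX : ∀ t ∈ Icc (0:ℝ) 1, HasDerivWithinAt X (X' t) (Icc (0:ℝ) 1) t)
    (hX' : ∀ t ∈ Icc (0:ℝ) 1,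
      HasDerivWithinAt X'
        (-((1 / 2) * (Real.sqrt π * Real.Gamma (1 / 4) / Real.Gamma (3 / 4)) ^ 2)
          * Real.sin (X t))
        (Icc (0:ℝ) 1) t)
    (h0 : X 0 = -(π / 2)) (h0' : X' 0 = 0) :
    X 1 = π / 2 ∧ X' 1 = 0 := by
  have hI : 0 < √π * Gamma (1 / 4) / Gamma (3 / 4) := by
    have := Gamma_pos_of_pos (by norm_num : (0 : ℝ) < 1 / 4)
    have := Gamma_pos_of_pos (by norm_num : (0 : ℝ) < 3 / 4)
    positivity
  refine pendulum_reaches_pi_div_two (by positivity) ?_ hX hX' h0 h0'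
  rw [pendulumTime_pi_div_two (by positivity), ← mul_assoc, mul_one_div_cancel two_ne_zero,
    one_mul, sqrt_sq hI.le, inv_mul_cancel₀ hI.ne']
end
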